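/- arXiv:2509.01870 — 5 statements merged into one kernel-verified Lean document; each statement's English description precedes it below -/
import Mathlib

section
/- (Determinacy of winning regions.) Let A be an n-player game arena with finite state set S, let φ ⊆ S^ω be a Muller objective, let I ⊆ [1,n] be a subset of players, and let J = [1,n] \ I. Then ⟨⟨I⟩⟩(φ) = S \ ⟨⟨J⟩⟩(¬φ), where ¬φ = S^ω \ φ. -/
/-- The set of states occurring infinitely often in the infinite sequence `ρ`. -/
def infOcc {S : Type*} (ρ : ℕ → S) : Set S := {t | ∀ N, ∃ k ≥ N, ρ k = t}

/-- Büchi objective: `inf(ρ) ∩ B ≠ ∅`. -/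
def Buchi {S : Type*} (B : Set S) : Set (ℕ → S) := {ρ | (infOcc ρ ∩ B).Nonempty}

/-- co-Büchi objective: `inf(ρ) ∩ B = ∅`. -/
def CoBuchi {S : Type*} (B : Set S) : Set (ℕ → S) := {ρ | infOcc ρ ∩ B = ∅}

/-- Parity objective: the minimum color seen infinitely often is even. -/
def ParityObj {S : Type*} (p : S → ℕ) : Set (ℕ → S) :=
  {ρ | Even (sInf (p '' infOcc ρ))}

/-- Streett objective given a set of pairs. -/
def Streett {S : Type*} (T : Set (Set S × Set S)) : Set (ℕ → S) :=
  ⋂ FG ∈ T, (CoBuchi FG.1 ∪ Buchi FG.2)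

/-- Rabin objective given a set of pairs. -/
def Rabin {S : Type*} (R : Set (Set S × Set S)) : Set (ℕ → S) :=
  ⋃ FG ∈ R, (Buchi FG.1 ∩ CoBuchi FG.2)

/-- A Muller objective: membership depends only on the set of states visited infinitely often. -/
def IsMuller {S : Type*} (φ : Set (ℕ → S)) : Prop :=
  ∃ F : Set (Set S), φ = {ρ | infOcc ρ ∈ F}


/-- An `n`-player game arena: the decomposition `(S_i)` of the state set is given by the
`owner` function, `E` is the transition relation, and every state has an `E`-successor. -/
structure Arena (n : ℕ) (S : Type*) where
  owner : S → Fin n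
  E : S → S → Prop
  succ_exists : ∀ s, ∃ t, E s t

namespace Arena

variable {n : ℕ} {S : Type*}

/-- A play: an infinite `E`-path. -/
def IsPlay (A : Arena n S) (ρ : ℕ → S) : Prop := ∀ k, A.E (ρ k) (ρ (k + 1))

/-- A (total representation of a) strategy `σ : S* S_i → S`: given the history `h` and the
current state `s` (so the full finite sequence is `h · s`), it picks an `E`-successor of `s`. -/
def IsStrategy (A : Arena n S) (σ : List S → S → S) : Prop :=
  ∀ h s, A.E s (σ h s)

/-- The history `ρ 0 … ρ (k-1)`. -/
def hist (ρ : ℕ → S) (k : ℕ) : List S := List.ofFn (fun j : Fin k => ρ j)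

/-- The play `ρ` is consistent with strategy `σ` of player `i`: whenever the current state
belongs to player `i`, the next state is the one chosen by `σ`. -/
def Consistent (A : Arena n S) (i : Fin n) (σ : List S → S → S) (ρ : ℕ → S) : Prop :=
  ∀ k, A.owner (ρ k) = i → ρ (k + 1) = σ (hist ρ k) (ρ k)

/-- `Out_s(σ_i)`: plays starting at `s` consistent with player `i`'s strategy `σ`. -/
def Out (A : Arena n S) (i : Fin n) (σ : List S → S → S) (s : S) : Set (ℕ → S) :=
  {ρ | ρ 0 = s ∧ A.IsPlay ρ ∧ A.Consistent i σ ρ}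

/-- `Out_s(Σ_P)`: plays starting at `s` consistent with the strategies of all players in `P`. -/
def OutP (A : Arena n S) (P : Set (Fin n)) (σ : Fin n → List S → S → S) (s : S) :
    Set (ℕ → S) :=
  {ρ | ρ 0 = s ∧ A.IsPlay ρ ∧ ∀ i ∈ P, A.Consistent i (σ i) ρ}

/-- The winning region `⟨⟨P⟩⟩(φ)`: states from which the players in `P` have a strategy
profile forcing `φ`. -/
def Win (A : Arena n S) (P : Set (Fin n)) (φ : Set (ℕ → S)) : Set S :=
  {s | ∃ σ : Fin n → List S → S → S,
    (∀ i ∈ P, A.IsStrategy (σ i)) ∧ A.OutP P σ s ⊆ φ}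

/-- One step of unfolding a full strategy profile: extend the history and move to
the state chosen by the owner of the current state. -/
def step (A : Arena n S) (σ : Fin n → List S → S → S) : List S × S → List S × S :=
  fun hc => (hc.1 ++ [hc.2], σ (A.owner hc.2) hc.1 hc.2)

/-- `Out_s(Σ)` for a full strategy profile `Σ` is a unique play; `outcome` is that play. -/
def outcome (A : Arena n S) (σ : Fin n → List S → S → S) (s : S) (k : ℕ) : S :=
  ((A.step σ)^[k] ([], s)).2

end Arena

/-- The payoff profile of a play `ρ` with respect to the objective profile `Φ`. -/
noncomputable def payoff {n : ℕ} {S : Type*} (Φ : Fin n → Set (ℕ → S)) (ρ : ℕ → S) :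
    Fin n → Bool :=
  fun i => @decide (ρ ∈ Φ i) (Classical.propDecidable _)

/-- Player `i`'s preference order on payoff profiles. -/
def Pref {n : ℕ} (i : Fin n) (u u' : Fin n → Bool) : Prop :=
  u i < u' i ∨ (u i = u' i ∧ (∀ j, u' j ≤ u j) ∧ ∃ j, u' j < u j)

namespace Arena

variable {n : ℕ} {S : Type*}

/-- `Σ` is a secure equilibrium at `s`: no player `i` has a deviation yielding a payoff
profile preferred by `i`. -/
def IsSE (A : Arena n S) (Φ : Fin n → Set (ℕ → S)) (σ : Fin n → List S → S → S)
    (s : S) : Prop :=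
  ∀ i : Fin n, ¬ ∃ σ' : List S → S → S, A.IsStrategy σ' ∧
    Pref i (payoff Φ (A.outcome σ s)) (payoff Φ (A.outcome (Function.update σ i σ') s))

/-- `SE_v`: states at which some secure equilibrium yields the payoff profile `v`. -/
def SEset (A : Arena n S) (Φ : Fin n → Set (ℕ → S)) (v : Fin n → Bool) : Set S :=
  {s | ∃ σ : Fin n → List S → S → S, (∀ i, A.IsStrategy (σ i)) ∧
    A.IsSE Φ σ s ∧ payoff Φ (A.outcome σ s) = v}

end Arena

/-- `φ_W = ⋂_{i ∈ W} φ_i` where `W = {i | v_i = 1}`. -/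
def phiW {n : ℕ} {S : Type*} (Φ : Fin n → Set (ℕ → S)) (v : Fin n → Bool) : Set (ℕ → S) :=
  ⋂ i ∈ {i : Fin n | v i = true}, Φ i

/-- `φ_L = ⋃_{i ∈ L} φ_i` where `L = {i | v_i = 0}`. -/
def phiL {n : ℕ} {S : Type*} (Φ : Fin n → Set (ℕ → S)) (v : Fin n → Bool) : Set (ℕ → S) :=
  ⋃ i ∈ {i : Fin n | v i = false}, Φ i

/-- The set `A_v` of states from which, for each player `i`, the other players can retaliate. -/
def Arena.Av {n : ℕ} {S : Type*} (A : Arena n S) (Φ : Fin n → Set (ℕ → S))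
    (v : Fin n → Bool) : Set S :=
  (⋂ w ∈ {i : Fin n | v i = true},
      A.Win ({w}ᶜ) (phiW Φ v ∪ phiL Φ v ∪ (Φ w)ᶜ)) ∩
  (⋂ l ∈ {i : Fin n | v i = false},
      A.Win ({l}ᶜ) ((phiW Φ v ∪ phiL Φ v) ∩ (Φ l)ᶜ))

/-!
Reformulate the game as a two-player game between the coalition and its complement, and argue
by McNaughton–Zielonka induction on the size of a subarena `U`. Let `p` be the player who wins
the plays visiting every state of `U` infinitely often.

If `!p` wins from some state, the `!p`-attractor of its winning region is won by `!p`, and the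
rest of `U` is a smaller subarena that `!p` cannot leave. So a winner there wins in `U` as
well: `p` because `!p` cannot escape, `!p` by switching strategies once `p` escapes into the
attractor.

Otherwise, by induction, for each state `x` player `p` wins everywhere in the smaller subarena
avoiding the `p`-attractor of `x`. Then `p` wins everywhere by cycling through the states as
targets: attract the play to the current target, and play the winning strategy of the subarena
in between. If the target changes infinitely often, every state is visited infinitely often;
otherwise the play eventually stays in one subarena and follows its winning strategy.
-/

noncomputable section

namespace MullerGame

open Set Classical

variable {S : Type*}

theorem hist_succ (ρ : ℕ → S) (k : ℕ) :
    Arena.hist ρ (k + 1) = Arena.hist ρ k ++ [ρ k] := by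
  rw [Arena.hist, List.ofFn_succ', List.concat_eq_append]
  rfl

theorem hist_succ_eq_cons (ρ : ℕ → S) (k : ℕ) :
    Arena.hist ρ (k + 1) = ρ 0 :: Arena.hist (fun i => ρ (i + 1)) k := by
  simp [Arena.hist, List.ofFn_succ]

theorem hist_add (ρ : ℕ → S) (t m : ℕ) :
    Arena.hist ρ (t + m) = Arena.hist ρ t ++ Arena.hist (fun i => ρ (t + i)) m := by
  induction m with
  | zero => simp [Arena.hist]
  | succ m ih => rw [← Nat.add_assoc, hist_succ, ih, hist_succ, List.append_assoc]

theorem infOcc_shift (ρ : ℕ → S) (t : ℕ) : infOcc (fun i => ρ (t + i)) = infOcc ρ := by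
  ext x
  refine ⟨fun h N => ?_, fun h N => ?_⟩
  · obtain ⟨k, hk, rfl⟩ := h N
    exact ⟨t + k, by omega, rfl⟩
  · obtain ⟨k, hk, rfl⟩ := h (t + N)
    exact ⟨k - t, by omega, by simp only [Nat.add_sub_cancel' (by omega : t ≤ k)]⟩

theorem infOcc_subset {ρ : ℕ → S} {U : Set S} (h : ∀ k, ρ k ∈ U) : infOcc ρ ⊆ U := by
  intro x hx
  obtain ⟨k, -, rfl⟩ := hx 0
  exact h k

section TwoPlayer

variable (E : S → S → Prop) (c : S → Bool) (F : Set (Set S))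

/- The two players are `true` and `false`, the state `s` belongs to player `c s`, and a
play is won by player `decide (infOcc ρ ∈ F)`. -/
def Good (p : Bool) (X : Set S) : Prop := decide (X ∈ F) = p

def Subarena (U : Set S) : Prop := ∀ s ∈ U, ∃ t ∈ U, E s t

def PlayIn (U : Set S) (ρ : ℕ → S) : Prop :=
  (∀ k, ρ k ∈ U) ∧ ∀ k, E (ρ k) (ρ (k + 1))

def IsStrategyOn (p : Bool) (U : Set S) (σ : List S → S → S) : Prop :=
  ∀ h s, s ∈ U → c s = p → σ h s ∈ U ∧ E s (σ h s)

def Follows (p : Bool) (σ : List S → S → S) (ρ : ℕ → S) : Prop :=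
  ∀ k, c (ρ k) = p → ρ (k + 1) = σ (Arena.hist ρ k) (ρ k)

def WinsFrom (p : Bool) (U : Set S) (σ : List S → S → S) (s : S) : Prop :=
  ∀ ρ, PlayIn E U ρ → ρ 0 = s → Follows c p σ ρ → Good F p (infOcc ρ)

def winRegion (p : Bool) (U : Set S) : Set S :=
  {s | s ∈ U ∧ ∃ σ, IsStrategyOn E c p U σ ∧ WinsFrom E c F p U σ s}

def IsDetermined (U : Set S) : Prop := ∀ s ∈ U, ∃ p, s ∈ winRegion E c F p U

def IsTrap (p : Bool) (U V : Set S) : Prop :=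
  ∀ s ∈ V, c s = p → ∀ t ∈ U, E s t → t ∈ V

variable {E c F}

theorem winRegion_subset {p : Bool} {U : Set S} : winRegion E c F p U ⊆ U := fun _ h => h.1

theorem Subarena.exists_isStrategyOn {U : Set S} (hU : Subarena E U) (p : Bool) :
    ∃ σ, IsStrategyOn E c p U σ := by
  choose! f hf using hU
  exact ⟨fun _ s => f s, fun _ s hs _ => hf s hs⟩

theorem IsStrategyOn.piecewise {p : Bool} {U V : Set S} {σ τ : List S → S → S}
    (hσ : IsStrategyOn E c p V σ) (hτ : IsStrategyOn E c p U τ) (hVU : V ⊆ U) :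
    IsStrategyOn E c p U (fun h s => if s ∈ V then σ h s else τ h s) := by
  intro h s hs hcs
  dsimp only
  split_ifs with hsV
  · exact ⟨hVU (hσ h s hsV hcs).1, (hσ h s hsV hcs).2⟩
  · exact hτ h s hs hcs

theorem Follows.of_piecewise {p : Bool} {V : Set S} {σ τ : List S → S → S} {ρ : ℕ → S}
    (h : Follows c p (fun h s => if s ∈ V then σ h s else τ h s) ρ) (hρ : ∀ k, ρ k ∈ V) :
    Follows c p σ ρ := fun k hk => by simp only [h k hk, if_pos (hρ k)]

theorem Good.not_good_not {p : Bool} {X : Set S} (h : Good F p X) : ¬ Good F (!p) X := by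
  unfold Good at *
  cases p <;> simp_all

def playWithHist (σ : List S → S → S) (s : S) : ℕ → List S × S
  | 0 => ([], s)
  | k + 1 =>
    ((playWithHist σ s k).1 ++ [(playWithHist σ s k).2],
      σ (playWithHist σ s k).1 (playWithHist σ s k).2)

def playOf (σ : List S → S → S) (s : S) (k : ℕ) : S := (playWithHist σ s k).2

theorem playWithHist_fst (σ : List S → S → S) (s : S) (k : ℕ) :
    (playWithHist σ s k).1 = Arena.hist (playOf σ s) k := by
  induction k with
  | zero => rfl
  | succ k ih => rw [hist_succ, ← ih]; rfl

theorem playOf_succ (σ : List S → S → S) (s : S) (k : ℕ) :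
    playOf σ s (k + 1) = σ (Arena.hist (playOf σ s) k) (playOf σ s k) := by
  rw [← playWithHist_fst]; rfl

theorem disjoint_winRegion {p : Bool} {U : Set S} :
    Disjoint (winRegion E c F p U) (winRegion E c F (!p) U) := by
  rw [disjoint_left]
  rintro s ⟨hs, σ₁, hσ₁, hwin₁⟩ ⟨-, σ₂, hσ₂, hwin₂⟩
  set τ : List S → S → S := fun h x => if c x = p then σ₁ h x else σ₂ h x
  have hτ : ∀ h x, x ∈ U → τ h x ∈ U ∧ E x (τ h x) := by
    intro h x hx
    by_cases hcx : c x = p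
    · simpa only [τ, if_pos hcx] using hσ₁ h x hx hcx
    · simpa only [τ, if_neg hcx] using hσ₂ h x hx (Bool.eq_not_iff.2 hcx)
  have hρU : ∀ k, playOf τ s k ∈ U := by
    intro k
    induction k with
    | zero => exact hs
    | succ k ih => rw [playOf_succ]; exact (hτ _ _ ih).1
  have hρ : PlayIn E U (playOf τ s) :=
    ⟨hρU, fun k => by rw [playOf_succ]; exact (hτ _ _ (hρU k)).2⟩
  have hfol₁ : Follows c p σ₁ (playOf τ s) := fun k hk => by
    rw [playOf_succ]; simp only [τ, if_pos hk]
  have hfol₂ : Follows c (!p) σ₂ (playOf τ s) := fun k hk => by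
    rw [playOf_succ]; simp only [τ, if_neg (Bool.eq_not_iff.1 hk)]
  exact (hwin₁ _ hρ rfl hfol₁).not_good_not (hwin₂ _ hρ rfl hfol₂)

theorem exists_uniform_strategy {p : Bool} {U W : Set S} (hU : Subarena E U)
    (hW : W ⊆ winRegion E c F p U) :
    ∃ σ, IsStrategyOn E c p U σ ∧ ∀ w ∈ W, WinsFrom E c F p U σ w := by
  obtain ⟨σ₀, hσ₀⟩ := hU.exists_isStrategyOn (c := c) p
  have : ∀ w, ∃ σ, IsStrategyOn E c p U σ ∧ (w ∈ W → WinsFrom E c F p U σ w) := by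
    intro w
    by_cases hw : w ∈ W
    · obtain ⟨-, σ, hσ, hwin⟩ := hW hw
      exact ⟨σ, hσ, fun _ => hwin⟩
    · exact ⟨σ₀, hσ₀, fun h => absurd h hw⟩
  choose σ hσ hwin using this
  -- a history starts with the initial state, so the strategy can be chosen by that state
  refine ⟨fun h s => σ (h.headD s) h s, fun h s hs hcs => hσ _ h s hs hcs,
    fun w hw ρ hρ h0 hfol => hwin w hw ρ hρ h0 fun k hk => ?_⟩
  rw [hfol k hk]
  cases k with
  | zero => simp [Arena.hist, h0]
  | succ k => simp [hist_succ_eq_cons, h0]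

theorem winRegion_subset_of_isTrap {p : Bool} {U V : Set S} (hU : Subarena E U) (hVU : V ⊆ U)
    (hV : IsTrap E c p U V) : winRegion E c F (!p) V ⊆ winRegion E c F (!p) U := by
  rintro s ⟨hs, σ, hσ, hwin⟩
  obtain ⟨τ, hτ⟩ := hU.exists_isStrategyOn (c := c) (!p)
  refine ⟨hVU hs, _, hσ.piecewise hτ hVU, fun ρ hρ h0 hfol => ?_⟩
  have hρV : ∀ k, ρ k ∈ V := by
    intro k
    induction k with
    | zero => exact h0 ▸ hs
    | succ k ih =>
      by_cases hk : c (ρ k) = !p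
      · simp only [hfol k hk, if_pos ih]
        exact (hσ _ _ ih hk).1
      · exact hV _ ih (by simpa using hk) _ (hρ.1 _) (hρ.2 k)
  exact hwin ρ ⟨hρV, hρ.2⟩ h0 (hfol.of_piecewise hρV)

def sinceEntry (B : Set S) (l : List S) : List S := l.dropWhile fun x => decide (x ∉ B)

theorem sinceEntry_hist_of_forall {B : Set S} {ρ : ℕ → S} {k : ℕ}
    (h : ∀ i < k, ρ i ∉ B) :
    sinceEntry B (Arena.hist ρ k) = [] := by
  rw [sinceEntry, List.dropWhile_eq_nil_iff]
  intro x hx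
  obtain ⟨i, rfl⟩ := List.mem_ofFn.1 hx
  simpa using h i i.isLt

theorem sinceEntry_hist_add {B : Set S} {ρ : ℕ → S} {t : ℕ} (ht : ρ t ∈ B)
    (hmin : ∀ i < t, ρ i ∉ B) (k : ℕ) :
    sinceEntry B (Arena.hist ρ (t + k)) = Arena.hist (fun i => ρ (t + i)) k := by
  rw [sinceEntry, hist_add, List.dropWhile_append_of_pos]
  · cases k with
    | zero => rfl
    | succ k => rw [hist_succ_eq_cons, List.dropWhile_cons_of_neg (by simpa using ht)]
  · intro x hx
    obtain ⟨i, rfl⟩ := List.mem_ofFn.1 hx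
    simpa using hmin i i.isLt

def switchStrategy (B : Set S) (σ₀ σB : List S → S → S) (h : List S) (x : S) : S :=
  if sinceEntry B (h ++ [x]) = [] then σ₀ h x else σB (sinceEntry B (h ++ [x])).dropLast x

theorem mem_winRegion_of_switch {p : Bool} {U B : Set S} {σ₀ σB : List S → S → S} {s : S}
    (hσ₀ : IsStrategyOn E c p U σ₀) (hσB : IsStrategyOn E c p U σB)
    (hB : ∀ w ∈ B, WinsFrom E c F p U σB w) (hs : s ∈ U)
    (havoid : ∀ ρ, PlayIn E U ρ → ρ 0 = s → Follows c p σ₀ ρ →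
      (∀ t, ρ t ∉ B) → Good F p (infOcc ρ)) :
    s ∈ winRegion E c F p U := by
  refine ⟨hs, switchStrategy B σ₀ σB, fun h x hx hcx => ?_, fun ρ hρ h0 hfol => ?_⟩
  · unfold switchStrategy
    split_ifs
    exacts [hσ₀ h x hx hcx, hσB _ x hx hcx]
  by_cases hhit : ∃ t, ρ t ∈ B
  · have hmin : ∀ i < Nat.find hhit, ρ i ∉ B := fun i => Nat.find_min hhit
    have hfolB : Follows c p σB (fun i => ρ (Nat.find hhit + i)) := by
      intro k hk
      change ρ (Nat.find hhit + k + 1) = _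
      rw [hfol _ hk, switchStrategy, ← hist_succ, Nat.add_assoc,
        sinceEntry_hist_add (Nat.find_spec hhit) hmin, if_neg (by simp [hist_succ]),
        hist_succ, List.dropLast_concat]
    rw [← infOcc_shift ρ (Nat.find hhit)]
    exact hB _ (Nat.find_spec hhit) _ ⟨fun _ => hρ.1 _, fun _ => hρ.2 _⟩ rfl hfolB
  · push Not at hhit
    refine havoid ρ hρ h0 (fun k hk => ?_) hhit
    rw [hfol k hk, switchStrategy, ← hist_succ,
      sinceEntry_hist_of_forall fun i _ => hhit i, if_pos rfl]

section Attractor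

variable (E c) (p : Bool) (U X : Set S)

def attractorLevel : ℕ → Set S
  | 0 => X
  | n + 1 => attractorLevel n ∪ {s | s ∈ U ∧
      ((c s = p ∧ ∃ t ∈ U, E s t ∧ t ∈ attractorLevel n) ∨
        (c s ≠ p ∧ ∀ t ∈ U, E s t → t ∈ attractorLevel n))}

def attractor : Set S := ⋃ n, attractorLevel E c p U X n

variable {E c p U X}

theorem attractorLevel_mono : Monotone (attractorLevel E c p U X) :=
  monotone_nat_of_le_succ fun _ => subset_union_left

theorem subset_attractor : X ⊆ attractor E c p U X := fun _ hs => mem_iUnion.2 ⟨0, hs⟩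

theorem attractorLevel_subset (hX : X ⊆ U) : ∀ n, attractorLevel E c p U X n ⊆ U
  | 0 => hX
  | n + 1 => union_subset (attractorLevel_subset hX n) fun _ hs => hs.1

theorem attractor_subset (hX : X ⊆ U) : attractor E c p U X ⊆ U :=
  iUnion_subset (attractorLevel_subset hX)

theorem mem_attractorLevel_succ {s : S} {n : ℕ} (hs : s ∈ attractorLevel E c p U X (n + 1))
    (hX : s ∉ X) :
    s ∈ U ∧ ((c s = p ∧ ∃ t ∈ U, E s t ∧ t ∈ attractorLevel E c p U X n) ∨
      (c s ≠ p ∧ ∀ t ∈ U, E s t → t ∈ attractorLevel E c p U X n)) := by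
  induction n with
  | zero => exact hs.resolve_left hX
  | succ n ih =>
    rcases hs with hs | hs
    · obtain ⟨hsU, ⟨hcs, t, htU, hst, ht⟩ | ⟨hcs, ht⟩⟩ := ih hs
      · exact ⟨hsU, Or.inl ⟨hcs, t, htU, hst, attractorLevel_mono n.le_succ ht⟩⟩
      · exact ⟨hsU, Or.inr ⟨hcs, fun t htU hst =>
          attractorLevel_mono n.le_succ (ht t htU hst)⟩⟩
    · exact hs

theorem isTrap_diff_attractor : IsTrap E c p U (U \ attractor E c p U X) := by
  rintro s ⟨hsU, hs⟩ hcs t htU hst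
  refine ⟨htU, fun ht => hs ?_⟩
  obtain ⟨n, hn⟩ := mem_iUnion.1 ht
  exact mem_iUnion.2 ⟨n + 1, Or.inr ⟨hsU, Or.inl ⟨hcs, t, htU, hst, hn⟩⟩⟩

theorem mem_attractor_of_forall [Finite S] {s : S} (hsU : s ∈ U) (hcs : c s ≠ p)
    (h : ∀ t ∈ U, E s t → t ∈ attractor E c p U X) : s ∈ attractor E c p U X := by
  -- finitely many successors, so they all lie in a common level
  have : ∀ᶠ n in Filter.atTop, ∀ t, t ∈ U → E s t →
      t ∈ attractorLevel E c p U X n := by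
    refine Filter.eventually_all.2 fun t => ?_
    by_cases ht : t ∈ U ∧ E s t
    · obtain ⟨n, hn⟩ := mem_iUnion.1 (h t ht.1 ht.2)
      exact Filter.eventually_atTop.2 ⟨n, fun m hm _ _ => attractorLevel_mono hm hn⟩
    · exact Filter.Eventually.of_forall fun _ htU hst => absurd ⟨htU, hst⟩ ht
  obtain ⟨n, hn⟩ := this.exists
  exact mem_iUnion.2 ⟨n + 1, Or.inr ⟨hsU, Or.inr ⟨hcs, hn⟩⟩⟩

theorem subarena_diff_attractor [Finite S] (hU : Subarena E U) :
    Subarena E (U \ attractor E c p U X) := by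
  intro s hs
  by_cases hcs : c s = p
  · obtain ⟨t, htU, hst⟩ := hU s hs.1
    exact ⟨t, isTrap_diff_attractor s hs hcs t htU hst, hst⟩
  · by_contra! h
    exact hs.2 (mem_attractor_of_forall hs.1 hcs fun t htU hst => by
      by_contra ht
      exact h t ⟨htU, ht⟩ hst)

theorem exists_attractorMove (hU : Subarena E U) :
    ∃ f : S → S, IsStrategyOn E c p U (fun _ s => f s) ∧ ∀ n s,
      s ∈ attractorLevel E c p U X (n + 1) → s ∉ X → c s = p →
        f s ∈ attractorLevel E c p U X n := by
  have : ∀ s, ∃ t, (s ∈ U → c s = p → t ∈ U ∧ E s t) ∧ ∀ n,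
      s ∈ attractorLevel E c p U X (n + 1) → s ∉ X → c s = p →
        t ∈ attractorLevel E c p U X n := by
    intro s
    by_cases h : ∃ n, s ∈ attractorLevel E c p U X (n + 1) ∧ s ∉ X ∧ c s = p
    · obtain ⟨hsU, ⟨-, t, htU, hst, ht⟩ | ⟨hcs, -⟩⟩ :=
        mem_attractorLevel_succ (Nat.find_spec h).1 (Nat.find_spec h).2.1
      · exact ⟨t, fun _ _ => ⟨htU, hst⟩, fun n hn _ _ =>
          attractorLevel_mono (Nat.find_min' h ⟨hn, (Nat.find_spec h).2⟩) ht⟩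
      · exact absurd (Nat.find_spec h).2.2 hcs
    · by_cases hsU : s ∈ U
      · obtain ⟨t, htU, hst⟩ := hU s hsU
        exact ⟨t, fun _ _ => ⟨htU, hst⟩, fun n hn hX hcs => absurd ⟨n, hn, hX, hcs⟩ h⟩
      · exact ⟨s, fun h' => absurd h' hsU, fun n hn hX hcs => absurd ⟨n, hn, hX, hcs⟩ h⟩
  choose f hf using this
  exact ⟨f, fun _ s hs hcs => (hf s).1 hs hcs, fun n s => (hf s).2 n⟩

theorem exists_attractorStrategy (hU : Subarena E U) :
    ∃ f : S → S, IsStrategyOn E c p U (fun _ s => f s) ∧ ∀ ρ, PlayIn E U ρ →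
      ρ 0 ∈ attractor E c p U X →
      (∀ t, ρ t ∈ attractor E c p U X → c (ρ t) = p → ρ (t + 1) = f (ρ t)) →
        ∃ t, ρ t ∈ X := by
  obtain ⟨f, hf, hdesc⟩ := exists_attractorMove hU
  refine ⟨f, hf, fun ρ hρ h0 hfol => ?_⟩
  obtain ⟨n, hn⟩ := mem_iUnion.1 h0
  induction n generalizing ρ with
  | zero => exact ⟨0, hn⟩
  | succ n ih =>
    by_cases hX : ρ 0 ∈ X
    · exact ⟨0, hX⟩
    have h1 : ρ 1 ∈ attractorLevel E c p U X n := by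
      obtain ⟨-, ⟨hcs, -⟩ | ⟨hcs, hall⟩⟩ := mem_attractorLevel_succ hn hX
      · rw [hfol 0 h0 hcs]
        exact hdesc n _ hn hX hcs
      · exact hall _ (hρ.1 1) (hρ.2 0)
    obtain ⟨t, ht⟩ := ih (fun i => ρ (i + 1)) ⟨fun _ => hρ.1 _, fun _ => hρ.2 _⟩
      (mem_iUnion.2 ⟨n, h1⟩) (fun t ht hct => hfol (t + 1) ht hct) h1
    exact ⟨t + 1, ht⟩

end Attractor

theorem attractor_winRegion_subset {p : Bool} {U : Set S} (hU : Subarena E U) :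
    attractor E c p U (winRegion E c F p U) ⊆ winRegion E c F p U := by
  intro s hs
  obtain ⟨σ, hσ, hwin⟩ := exists_uniform_strategy hU subset_rfl
  obtain ⟨f, hf, hreach⟩ := exists_attractorStrategy (X := winRegion E c F p U) hU
  refine mem_winRegion_of_switch hf hσ hwin (attractor_subset winRegion_subset hs)
    fun ρ hρ h0 hfol hB => ?_
  obtain ⟨t, ht⟩ := hreach ρ hρ (h0 ▸ hs) fun t _ hct => hfol t hct
  exact absurd ht (hB t)

theorem winRegion_diff_subset {p : Bool} {U B : Set S} (hU : Subarena E U)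
    (hB : B ⊆ winRegion E c F p U) : winRegion E c F p (U \ B) ⊆ winRegion E c F p U := by
  rintro s ⟨hs, σ, hσ, hwin⟩
  obtain ⟨σB, hσB, hBwin⟩ := exists_uniform_strategy hU hB
  obtain ⟨τ, hτ⟩ := hU.exists_isStrategyOn (c := c) p
  refine mem_winRegion_of_switch (hσ.piecewise hτ sdiff_subset) hσB hBwin hs.1
    fun ρ hρ h0 hfol hnB => ?_
  have hρV : ∀ k, ρ k ∈ U \ B := fun k => ⟨hρ.1 k, hnB k⟩
  exact hwin ρ ⟨hρV, hρ.2⟩ h0 (hfol.of_piecewise hρV)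

theorem isDetermined_of_isDetermined_diff {p : Bool} {U : Set S} (hU : Subarena E U)
    (h : IsDetermined E c F (U \ attractor E c p U (winRegion E c F p U))) :
    IsDetermined E c F U := by
  intro s hs
  by_cases hA : s ∈ attractor E c p U (winRegion E c F p U)
  · exact ⟨p, attractor_winRegion_subset hU hA⟩
  obtain ⟨q, hq⟩ := h s ⟨hs, hA⟩
  obtain rfl | rfl := Bool.eq_or_eq_not q p
  · exact ⟨q, winRegion_diff_subset hU (attractor_winRegion_subset hU) hq⟩
  · exact ⟨!p, winRegion_subset_of_isTrap hU sdiff_subset isTrap_diff_attractor hq⟩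

section Rotation

variable {target : ℕ → S} {ρ : ℕ → S}

/- The rotation strategy remembers the index `m` of its current target and the history since
that target was set; it replays on that history the winning strategy `σ m` of the subarena
avoiding the attractor of `target m`. -/
def rotationStep (target : ℕ → S) (st : ℕ × List S) (y : S) : ℕ × List S :=
  if y = target st.1 then (st.1 + 1, []) else (st.1, st.2 ++ [y])

def rotationMemory (target : ℕ → S) (l : List S) : ℕ × List S :=
  l.foldl (rotationStep target) (0, [])

theorem rotationMemory_hist_succ (t : ℕ) :
    rotationMemory target (Arena.hist ρ (t + 1)) =
      rotationStep target (rotationMemory target (Arena.hist ρ t)) (ρ t) := by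
  rw [rotationMemory, hist_succ, List.foldl_append]
  rfl

theorem rotationMemory_hist_succ_fst (t : ℕ) :
    (rotationMemory target (Arena.hist ρ (t + 1))).1 =
      if ρ t = target (rotationMemory target (Arena.hist ρ t)).1
      then (rotationMemory target (Arena.hist ρ t)).1 + 1
      else (rotationMemory target (Arena.hist ρ t)).1 := by
  rw [rotationMemory_hist_succ, rotationStep]
  split_ifs <;> rfl

theorem rotationMemory_hist_fst_le (t : ℕ) :
    (rotationMemory target (Arena.hist ρ t)).1 ≤ t := by
  induction t with
  | zero => exact le_rfl
  | succ t ih => rw [rotationMemory_hist_succ_fst]; split_ifs <;> omega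

theorem monotone_rotationMemory_hist_fst :
    Monotone fun t => (rotationMemory target (Arena.hist ρ t)).1 :=
  monotone_nat_of_le_succ fun t => by
    rw [rotationMemory_hist_succ_fst]
    split_ifs <;> omega

theorem exists_eq_target_of_lt {m t : ℕ} (h : m < (rotationMemory target (Arena.hist ρ t)).1) :
    ∃ i, m ≤ i ∧ ρ i = target m := by
  induction t with
  | zero => exact absurd h (Nat.not_lt_zero m)
  | succ t ih =>
    rw [rotationMemory_hist_succ_fst] at h
    split_ifs at h with hρt
    · rcases Nat.lt_or_ge m (rotationMemory target (Arena.hist ρ t)).1 with hlt | hge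
      · exact ih hlt
      · have hm : (rotationMemory target (Arena.hist ρ t)).1 = m := by omega
        exact ⟨t, hm ▸ rotationMemory_hist_fst_le t, hm ▸ hρt⟩
    · exact ih h

theorem infOcc_eq_of_unbounded {U : Set S} (hevery : ∀ y ∈ U, ∀ N, ∃ m ≥ N, target m = y)
    (hρ : ∀ t, ρ t ∈ U)
    (hunb : ∀ m, ∃ t, m < (rotationMemory target (Arena.hist ρ t)).1) :
    infOcc ρ = U := by
  refine (infOcc_subset hρ).antisymm fun y hy N => ?_
  obtain ⟨m, hm, rfl⟩ := hevery y hy N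
  obtain ⟨t, ht⟩ := hunb m
  obtain ⟨i, hi, hρi⟩ := exists_eq_target_of_lt ht
  exact ⟨i, hm.trans hi, hρi⟩

theorem exists_rotationMemory_eq_of_bounded
    (hbdd : ∃ M, ∀ t, (rotationMemory target (Arena.hist ρ t)).1 ≤ M) :
    ∃ M T, ∀ t ≥ T, ρ t ≠ target M ∧
      rotationMemory target (Arena.hist ρ t) = (M, Arena.hist (fun i => ρ (T + i)) (t - T)) := by
  set mode := fun t => (rotationMemory target (Arena.hist ρ t)).1
  have hmode_succ : ∀ t, mode (t + 1) = if ρ t = target (mode t) then mode t + 1 else mode t :=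
    rotationMemory_hist_succ_fst
  obtain ⟨M, hM⟩ := hbdd
  have hex : ∃ T, mode T = sSup (range mode) :=
    Nat.sSup_mem (range_nonempty mode) ⟨M, forall_mem_range.2 hM⟩
  have hmax : ∀ t, mode t ≤ sSup (range mode) :=
    fun t => le_csSup ⟨M, forall_mem_range.2 hM⟩ ⟨t, rfl⟩
  have hstable : ∀ t ≥ Nat.find hex, mode t = sSup (range mode) := fun t ht =>
    (hmax t).antisymm (Nat.find_spec hex ▸ monotone_rotationMemory_hist_fst ht)
  have hne : ∀ t ≥ Nat.find hex, ρ t ≠ target (sSup (range mode)) := by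
    intro t ht hρt
    have := hmax (t + 1)
    rw [hmode_succ, hstable t ht, if_pos hρt] at this
    omega
  -- at time `Nat.find hex` the current target has just been set, so the memory is empty
  have hstart : (rotationMemory target (Arena.hist ρ (Nat.find hex))).2 = [] := by
    by_cases h0 : Nat.find hex = 0
    · rw [h0]; rfl
    obtain ⟨u, hu⟩ := Nat.exists_eq_add_one_of_ne_zero h0
    have hu' : mode u ≠ sSup (range mode) := Nat.find_min hex (by omega)
    have hρu : ρ u = target (mode u) := by
      by_contra h
      have := hstable (u + 1) (by omega)
      rw [hmode_succ, if_neg h] at this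
      exact hu' this
    rw [hu, rotationMemory_hist_succ, rotationStep, if_pos hρu]
  refine ⟨_, Nat.find hex, fun t ht => ⟨hne t ht, ?_⟩⟩
  induction t, ht using Nat.le_induction with
  | base => exact Prod.ext (hstable _ le_rfl) (by rw [Nat.sub_self]; exact hstart)
  | succ t ht ih =>
    rw [rotationMemory_hist_succ, ih, rotationStep, if_neg (hne t ht),
      show t + 1 - Nat.find hex = t - Nat.find hex + 1 by omega, hist_succ,
      Nat.add_sub_cancel' ht]

def rotationStrategy (target : ℕ → S) (V : ℕ → Set S) (σ : ℕ → List S → S → S)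
    (f : ℕ → S → S) (h : List S) (y : S) : S :=
  let st := rotationMemory target (h ++ [y])
  if y ∈ V st.1 then σ st.1 st.2.dropLast y else f st.1 y

theorem isStrategyOn_rotationStrategy {p : Bool} {U : Set S} {V : ℕ → Set S}
    {σ : ℕ → List S → S → S} {f : ℕ → S → S}
    (hσ : ∀ m, IsStrategyOn E c p (V m) (σ m))
    (hV : ∀ m, V m ⊆ U) (hf : ∀ m, IsStrategyOn E c p U fun _ s => f m s) :
    IsStrategyOn E c p U (rotationStrategy target V σ f) := by
  intro h y hy hcy
  unfold rotationStrategy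
  dsimp only
  split_ifs with hyV
  · exact ⟨hV _ (hσ _ _ y hyV hcy).1, (hσ _ _ y hyV hcy).2⟩
  · exact hf _ h y hy hcy

theorem good_of_rotationMemory_eq {p : Bool} {U : Set S} {σ : ℕ → List S → S → S}
    {f : ℕ → S → S} {M T : ℕ}
    (hσ : ∀ v ∈ U \ attractor E c p U {target M},
      WinsFrom E c F p (U \ attractor E c p U {target M}) (σ M) v)
    (hf : ∀ ρ, PlayIn E U ρ → ρ 0 ∈ attractor E c p U {target M} →
      (∀ t, ρ t ∈ attractor E c p U {target M} → c (ρ t) = p →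
        ρ (t + 1) = f M (ρ t)) →
      ∃ t, ρ t ∈ ({target M} : Set S))
    (hρ : PlayIn E U ρ)
    (hfol : Follows c p
      (rotationStrategy target (fun m => U \ attractor E c p U {target m}) σ f) ρ)
    (hmem : ∀ t ≥ T, ρ t ≠ target M ∧
      rotationMemory target (Arena.hist ρ t) = (M, Arena.hist (fun i => ρ (T + i)) (t - T))) :
    Good F p (infOcc ρ) := by
  have hmove : ∀ t ≥ T, c (ρ t) = p →
      (ρ t ∈ U \ attractor E c p U {target M} →
        ρ (t + 1) = σ M (Arena.hist (fun i => ρ (T + i)) (t - T)) (ρ t)) ∧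
      (ρ t ∉ U \ attractor E c p U {target M} → ρ (t + 1) = f M (ρ t)) := by
    intro t ht hct
    rw [hfol t hct, rotationStrategy, ← hist_succ, (hmem (t + 1) (by omega)).2]
    refine ⟨fun h => ?_, fun h => if_neg h⟩
    rw [if_pos h, show t + 1 - T = t - T + 1 by omega, hist_succ, List.dropLast_concat]
  -- the current target is never reached again, so the play never enters its attractor
  have hV : ∀ t ≥ T, ρ t ∈ U \ attractor E c p U {target M} := by
    intro t ht
    refine ⟨hρ.1 t, fun hA => ?_⟩
    obtain ⟨d, hd⟩ := hf (fun i => ρ (t + i)) ⟨fun _ => hρ.1 _, fun _ => hρ.2 _⟩ hA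
      fun d hd hcd => by
        change ρ (t + d + 1) = _
        exact (hmove (t + d) (by omega) hcd).2 fun h => h.2 hd
    exact (hmem (t + d) (by omega)).1 hd
  have hfolσ : Follows c p (σ M) (fun i => ρ (T + i)) := by
    intro k hk
    change ρ (T + k + 1) = _
    rw [(hmove (T + k) (by omega) hk).1 (hV _ (by omega)), Nat.add_sub_cancel_left]
  rw [← infOcc_shift ρ T]
  exact hσ _ (hV T le_rfl) _ ⟨fun _ => hV _ (by omega), fun _ => hρ.2 _⟩ rfl hfolσ

end Rotation

theorem subset_winRegion_of_good [Finite S] {p : Bool} {U : Set S} (hU : Subarena E U)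
    (hgood : Good F p U)
    (hsub : ∀ x ∈ U,
      U \ attractor E c p U {x} ⊆ winRegion E c F p (U \ attractor E c p U {x})) :
    U ⊆ winRegion E c F p U := by
  intro s hs
  obtain ⟨g, hg⟩ := @exists_surjective_nat U ⟨⟨s, hs⟩⟩ _
  set target : ℕ → S := fun m => g m.unpair.1
  have hevery : ∀ y ∈ U, ∀ N, ∃ m ≥ N, target m = y := by
    intro y hy N
    obtain ⟨j, hj⟩ := hg ⟨y, hy⟩
    exact ⟨Nat.pair j N, Nat.right_le_pair j N, by simp [target, hj]⟩
  choose σ hσ hσwin using fun m =>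
    exists_uniform_strategy (subarena_diff_attractor hU) (hsub (target m) (g _).2)
  choose f hf hreach using fun m =>
    exists_attractorStrategy (E := E) (c := c) (p := p) (X := {target m}) hU
  refine ⟨hs, rotationStrategy target _ σ f,
    isStrategyOn_rotationStrategy hσ (fun _ => sdiff_subset) hf,
    fun ρ hρ _ hfol => ?_⟩
  by_cases hunb : ∀ m, ∃ t, m < (rotationMemory target (Arena.hist ρ t)).1
  · rwa [infOcc_eq_of_unbounded hevery hρ.1 hunb]
  · push Not at hunb
    obtain ⟨M, T, hmem⟩ := exists_rotationMemory_eq_of_bounded hunb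
    exact good_of_rotationMemory_eq (hσwin M) (hreach M) hρ hfol hmem

theorem isDetermined [Finite S] {U : Set S} (hU : Subarena E U) : IsDetermined E c F U := by
  induction U using WellFoundedLT.induction with
  | _ U ih =>
    obtain ⟨p, hp⟩ : ∃ p, Good F p U := ⟨_, rfl⟩
    by_cases hne : (winRegion E c F (!p) U).Nonempty
    · obtain ⟨w, hw⟩ := hne
      refine isDetermined_of_isDetermined_diff (p := !p) hU (ih _ ?_ (subarena_diff_attractor hU))
      exact sdiff_ssubset_left_iff.2 ⟨w, winRegion_subset hw, subset_attractor hw⟩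
    · have hsub : ∀ x ∈ U,
          U \ attractor E c p U {x} ⊆ winRegion E c F p (U \ attractor E c p U {x}) := by
        intro x hx s hs
        have hlt : U \ attractor E c p U {x} ⊂ U :=
          sdiff_ssubset_left_iff.2 ⟨x, hx, subset_attractor rfl⟩
        obtain ⟨q, hq⟩ := ih _ hlt (subarena_diff_attractor hU) s hs
        obtain rfl | rfl := Bool.eq_or_eq_not q p
        · exact hq
        · exact absurd
            ⟨s, winRegion_subset_of_isTrap hU sdiff_subset isTrap_diff_attractor hq⟩ hne
      exact fun s hs => ⟨p, subset_winRegion_of_good hU hp hsub hs⟩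

theorem winRegion_eq_diff [Finite S] {p : Bool} {U : Set S} (hU : Subarena E U) :
    winRegion E c F p U = U \ winRegion E c F (!p) U := by
  refine Subset.antisymm (fun s hs => ⟨hs.1, disjoint_winRegion.notMem_of_mem_left hs⟩) ?_
  rintro s ⟨hs, hs'⟩
  obtain ⟨q, hq⟩ := isDetermined hU s hs
  obtain rfl | rfl := Bool.eq_or_eq_not q p
  · exact hq
  · exact absurd hq hs'

end TwoPlayer

theorem win_eq_winRegion {n : ℕ} (A : Arena n S) (P : Set (Fin n)) (c : S → Bool) (p : Bool)
    (hc : ∀ s, c s = p ↔ A.owner s ∈ P) (F : Set (Set S)) (ψ : Set (ℕ → S))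
    (hψ : ψ = {ρ | Good F p (infOcc ρ)}) :
    A.Win P ψ = winRegion A.E c F p univ := by
  subst hψ
  ext s
  constructor
  · rintro ⟨σ, hσ, hout⟩
    refine ⟨mem_univ s, fun h x => σ (A.owner x) h x,
      fun h x _ hx => ⟨mem_univ _, hσ _ ((hc x).1 hx) h x⟩, fun ρ hρ h0 hfol => hout ?_⟩
    exact ⟨h0, hρ.2, fun i hi k hk => by simp only [hfol k ((hc _).2 (hk ▸ hi)), hk]⟩
  · rintro ⟨-, τ, hτ, hwin⟩
    choose next hnext using A.succ_exists
    refine ⟨fun _ h x => if c x = p then τ h x else next x, fun _ _ h x => ?_,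
      fun ρ ⟨h0, hρ, hcons⟩ => hwin ρ ⟨fun _ => mem_univ _, hρ⟩ h0 fun k hk => ?_⟩
    · dsimp only
      split_ifs with hx
      exacts [(hτ h x (mem_univ x) hx).2, hnext x]
    · simp only [hcons _ ((hc _).1 hk) k rfl, if_pos hk]

end MullerGame

end

open MullerGame in
/-- Determinacy of winning regions for Muller objectives:
`⟨⟨I⟩⟩(φ) = S \ ⟨⟨J⟩⟩(¬φ)` with `J = [1,n] \ I`. -/
theorem win_determinacy {n : ℕ} {S : Type*} [Fintype S]
    (A : Arena n S) (φ : Set (ℕ → S)) (hφ : IsMuller φ) (I : Set (Fin n)) :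
    A.Win I φ = (A.Win Iᶜ φᶜ)ᶜ := by
  classical
  obtain ⟨F, rfl⟩ := hφ
  set c : S → Bool := fun s => decide (A.owner s ∈ I)
  have hU : Subarena A.E Set.univ := fun s _ =>
    let ⟨t, ht⟩ := A.succ_exists s
    ⟨t, Set.mem_univ t, ht⟩
  rw [win_eq_winRegion A I c true (by simp [c]) F _ (by ext; simp [Good]),
    win_eq_winRegion A Iᶜ c false (by simp [c]) F _ (by ext; simp [Good]),
    winRegion_eq_diff hU, Bool.not_true, Set.compl_eq_univ_sdiff]
end

section
/- (Characterization of secure equilibria.) Let G = (A, Φ) be an n-player game on a finite arena A with objective profile Φ = (φ₁, …, φ_n), where every φ_i is a Muller objective, and let v = (v₁, …, v_n) ∈ {0,1}^n be a constraint. Let I = [1,n], W = {i | v_i = 1}, L = {i | v_i = 0}, φ_W = ⋂_{i∈W} φ_i, φ_L = ⋃_{i∈L} φ_i, and A_v = ⋂_{w∈W} ⟨⟨I\{w}⟩⟩(φ_W ∪ φ_L ∪ ¬φ_w) ∩ ⋂_{l∈L} ⟨⟨I\{l}⟩⟩((φ_W ∪ φ_L) ∩ ¬φ_l). Then SE_v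 equals the set of states s ∈ A_v from which there exists a play that starts at s, stays inside A_v forever, and belongs to φ_W ∩ ¬φ_L. -/
/-! ### Auxiliary lemmas for the characterization of secure equilibria -/

section Aux

open Arena

variable {n : ℕ} {S : Type*}

@[simp] lemma hist_length (ρ : ℕ → S) (k : ℕ) : (Arena.hist ρ k).length = k := by
  simp [Arena.hist]

lemma hist_zero (ρ : ℕ → S) : Arena.hist ρ 0 = [] := rfl

lemma hist_getElem (ρ : ℕ → S) (k j : ℕ) (hj : j < (Arena.hist ρ k).length) :
    (Arena.hist ρ k)[j] = ρ j := by
  simp [Arena.hist]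

lemma hist_succ (ρ : ℕ → S) (k : ℕ) :
    Arena.hist ρ (k + 1) = Arena.hist ρ k ++ [ρ k] := by
  apply List.ext_getElem (by simp)
  intro j h1 h2
  rcases Nat.lt_or_ge j k with h | h
  · rw [hist_getElem, List.getElem_append_left (by simpa using h), hist_getElem]
  · have hj : j = k := by simp at h1; omega
    subst hj
    rw [hist_getElem, List.getElem_append_right (by simp)]
    simp

lemma hist_congr {ρ τ : ℕ → S} {k : ℕ} (h : ∀ j < k, ρ j = τ j) :
    Arena.hist ρ k = Arena.hist τ k := by
  apply List.ext_getElem (by simp)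
  intro j h1 h2
  rw [hist_getElem, hist_getElem]
  exact h j (by simpa using h1)

lemma hist_add (ρ : ℕ → S) (k m : ℕ) :
    Arena.hist ρ (k + m) = Arena.hist ρ k ++ Arena.hist (fun j => ρ (k + j)) m := by
  induction m with
  | zero => simp [hist_zero]
  | succ m ih => rw [← Nat.add_assoc, hist_succ, ih, hist_succ, List.append_assoc]

lemma hist_drop (ρ : ℕ → S) (k m : ℕ) :
    (Arena.hist ρ (k + m)).drop k = Arena.hist (fun j => ρ (k + j)) m := by
  rw [hist_add, List.drop_append_of_le_length (by simp), List.drop_of_length_le (by simp)]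
  simp

lemma infOcc_shift (ρ : ℕ → S) (k : ℕ) : infOcc (fun m => ρ (k + m)) = infOcc ρ := by
  ext t
  constructor
  · intro h N
    obtain ⟨m, hm, he⟩ := h N
    exact ⟨k + m, by omega, he⟩
  · intro h N
    obtain ⟨m, hm, he⟩ := h (N + k)
    exact ⟨m - k, by omega, by
      show ρ (k + (m - k)) = t
      rw [show k + (m - k) = m by omega]; exact he⟩

/-- Glue the first `k` values of `ρ` with the play `π`. -/
def glue (k : ℕ) (ρ π : ℕ → S) : ℕ → S := fun j => if j < k then ρ j else π (j - k)

lemma glue_lt {k j : ℕ} (ρ π : ℕ → S) (h : j < k) : glue k ρ π j = ρ j := if_pos h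

lemma glue_add (k : ℕ) (ρ π : ℕ → S) (m : ℕ) : glue k ρ π (k + m) = π m := by
  simp [glue, Nat.add_sub_cancel_left]

lemma infOcc_glue (k : ℕ) (ρ π : ℕ → S) : infOcc (glue k ρ π) = infOcc π := by
  have h : (fun m => glue k ρ π (k + m)) = π := funext (glue_add k ρ π)
  rw [← infOcc_shift (glue k ρ π) k, h]

/-! #### Outcome lemmas -/

lemma step_iterate (A : Arena n S) (σ : Fin n → List S → S → S) (s : S) (k : ℕ) :
    (A.step σ)^[k] ([], s) = (Arena.hist (A.outcome σ s) k, A.outcome σ s k) := by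
  induction k with
  | zero => rfl
  | succ k ih =>
    have h2 : A.outcome σ s (k + 1)
        = σ (A.owner (A.outcome σ s k)) (Arena.hist (A.outcome σ s) k) (A.outcome σ s k) := by
      show ((A.step σ)^[k+1] ([], s)).2 = _
      rw [Function.iterate_succ_apply', ih]; rfl
    rw [Function.iterate_succ_apply', ih]
    unfold Arena.step
    rw [hist_succ, h2]

lemma outcome_zero (A : Arena n S) (σ : Fin n → List S → S → S) (s : S) :
    A.outcome σ s 0 = s := rfl

lemma outcome_succ (A : Arena n S) (σ : Fin n → List S → S → S) (s : S) (k : ℕ) :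
    A.outcome σ s (k + 1)
      = σ (A.owner (A.outcome σ s k)) (Arena.hist (A.outcome σ s) k) (A.outcome σ s k) := by
  show ((A.step σ)^[k+1] ([], s)).2 = _
  rw [Function.iterate_succ_apply', step_iterate]; rfl

lemma outcome_unique (A : Arena n S) {σ : Fin n → List S → S → S} {s : S} {ρ : ℕ → S}
    (hρ0 : ρ 0 = s)
    (hstep : ∀ k, ρ (k + 1) = σ (A.owner (ρ k)) (Arena.hist ρ k) (ρ k)) :
    ρ = A.outcome σ s := by
  have key : ∀ k, ρ k = A.outcome σ s k ∧ Arena.hist ρ k = Arena.hist (A.outcome σ s) k := by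
    intro k
    induction k with
    | zero => exact ⟨hρ0, rfl⟩
    | succ k ih =>
      refine ⟨?_, ?_⟩
      · rw [hstep k, ih.1, ih.2, outcome_succ]
      · rw [hist_succ, hist_succ, ih.1, ih.2]
  funext k; exact (key k).1

lemma outcome_isPlay (A : Arena n S) {σ : Fin n → List S → S → S} (s : S)
    (hσ : ∀ i, A.IsStrategy (σ i)) : A.IsPlay (A.outcome σ s) := by
  intro k; rw [outcome_succ]; exact hσ _ _ _

lemma outcome_consistent (A : Arena n S) (σ : Fin n → List S → S → S) (s : S) (i : Fin n) :
    A.Consistent i (σ i) (A.outcome σ s) := by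
  intro k hk; rw [outcome_succ, hk]

/-! #### The mimicking strategy -/

open Classical in
/-- The strategy that follows the play `ρ` along prefixes of `ρ`. -/
noncomputable def Arena.mimic (A : Arena n S) (ρ : ℕ → S) : List S → S → S :=
  fun h t => if h = Arena.hist ρ h.length ∧ t = ρ h.length
             then ρ (h.length + 1) else Classical.choose (A.succ_exists t)

lemma mimic_isStrategy (A : Arena n S) {ρ : ℕ → S} (hρ : A.IsPlay ρ) :
    A.IsStrategy (A.mimic ρ) := by
  intro h t
  unfold Arena.mimic
  split
  next hc => rw [hc.2]; exact hρ _
  next => exact Classical.choose_spec (A.succ_exists t)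

lemma mimic_on (A : Arena n S) (ρ : ℕ → S) (k : ℕ) :
    A.mimic ρ (Arena.hist ρ k) (ρ k) = ρ (k + 1) := by
  unfold Arena.mimic
  rw [if_pos (by simp)]
  simp

lemma outcome_update_mimic (A : Arena n S) (σ : Fin n → List S → S → S) (i : Fin n)
    (ρ : ℕ → S) (hcons : ∀ j, j ≠ i → A.Consistent j (σ j) ρ) :
    ρ = A.outcome (Function.update σ i (A.mimic ρ)) (ρ 0) := by
  apply outcome_unique A rfl
  intro k
  by_cases h : A.owner (ρ k) = i
  · rw [h, Function.update_self, mimic_on]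
  · rw [Function.update_of_ne h]
    exact hcons _ h k rfl

/-! #### Payoff and preference lemmas -/

lemma payoff_eq_true_iff {Φ : Fin n → Set (ℕ → S)} {ρ : ℕ → S} {i : Fin n} :
    payoff Φ ρ i = true ↔ ρ ∈ Φ i := by
  simp [payoff]

lemma payoff_eq_false_iff {Φ : Fin n → Set (ℕ → S)} {ρ : ℕ → S} {i : Fin n} :
    payoff Φ ρ i = false ↔ ρ ∉ Φ i := by
  simp [payoff]

lemma payoff_congr {Φ : Fin n → Set (ℕ → S)} (hM : ∀ i, IsMuller (Φ i)) {ρ π : ℕ → S}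
    (h : infOcc ρ = infOcc π) : payoff Φ ρ = payoff Φ π := by
  funext i
  obtain ⟨F, hF⟩ := hM i
  have hiff : ρ ∈ Φ i ↔ π ∈ Φ i := by rw [hF]; simp only [Set.mem_setOf_eq, h]
  simp only [payoff]
  exact decide_eq_decide.mpr hiff

lemma mem_phiW {Φ : Fin n → Set (ℕ → S)} {v : Fin n → Bool} {ρ : ℕ → S} :
    ρ ∈ phiW Φ v ↔ ∀ i, v i = true → ρ ∈ Φ i := by
  simp [phiW]

lemma mem_phiL {Φ : Fin n → Set (ℕ → S)} {v : Fin n → Bool} {ρ : ℕ → S} :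
    ρ ∈ phiL Φ v ↔ ∃ i, v i = false ∧ ρ ∈ Φ i := by
  simp [phiL]

lemma payoff_eq_of (Φ : Fin n → Set (ℕ → S)) (v : Fin n → Bool) {ρ : ℕ → S}
    (hW : ρ ∈ phiW Φ v) (hL : ρ ∉ phiL Φ v) : payoff Φ ρ = v := by
  funext i
  cases hv : v i with
  | true => exact payoff_eq_true_iff.mpr (mem_phiW.mp hW i hv)
  | false => exact payoff_eq_false_iff.mpr fun hc => hL (mem_phiL.mpr ⟨i, hv, hc⟩)

lemma pref_core {Φ : Fin n → Set (ℕ → S)} {v : Fin n → Bool} {π : ℕ → S} {i : Fin n}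
    (h1 : π ∉ phiW Φ v) (h2 : π ∉ phiL Φ v) (h3 : payoff Φ π i = v i) :
    Pref i v (payoff Φ π) := by
  right
  refine ⟨h3.symm, ?_, ?_⟩
  · intro j
    cases hj : v j with
    | false =>
      have : π ∉ Φ j := fun hc => h2 (mem_phiL.mpr ⟨j, hj, hc⟩)
      rw [payoff_eq_false_iff.mpr this]
    | true => exact Bool.le_true _
  · rw [mem_phiW] at h1
    push_neg at h1
    obtain ⟨j, hj, hnot⟩ := h1
    exact ⟨j, by rw [payoff_eq_false_iff.mpr hnot, hj]; exact Bool.false_lt_true⟩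

lemma not_lt_second {Φ : Fin n → Set (ℕ → S)} {v : Fin n → Bool} {π : ℕ → S}
    (hWL : π ∈ phiW Φ v ∪ phiL Φ v) (hle : ∀ j, payoff Φ π j ≤ v j)
    {j : Fin n} (hlt : payoff Φ π j < v j) : False := by
  rcases hWL with hW | hL
  · rw [Bool.lt_iff] at hlt
    have : π ∈ Φ j := mem_phiW.mp hW j hlt.2
    rw [payoff_eq_true_iff.mpr this] at hlt
    exact absurd hlt.1 (by simp)
  · obtain ⟨j', hj', hin⟩ := mem_phiL.mp hL
    have := hle j'
    rw [payoff_eq_true_iff.mpr hin, hj'] at this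
    exact absurd this (by simp)

lemma not_pref_of_mem_W {Φ : Fin n → Set (ℕ → S)} {v : Fin n → Bool} {π : ℕ → S} {i : Fin n}
    (hvi : v i = true) (ht : π ∈ phiW Φ v ∪ phiL Φ v ∪ (Φ i)ᶜ) :
    ¬ Pref i v (payoff Φ π) := by
  rintro (hlt | ⟨heq, hle, j, hlt⟩)
  · rw [hvi, Bool.lt_iff] at hlt
    exact absurd hlt.1 (by simp)
  · have hΦ : π ∈ Φ i := payoff_eq_true_iff.mp (by rw [← heq, hvi])
    have hWL : π ∈ phiW Φ v ∪ phiL Φ v := ht.resolve_right fun hc => hc hΦ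
    exact not_lt_second hWL hle hlt

lemma not_pref_of_mem_L {Φ : Fin n → Set (ℕ → S)} {v : Fin n → Bool} {π : ℕ → S} {i : Fin n}
    (hvi : v i = false) (ht : π ∈ (phiW Φ v ∪ phiL Φ v) ∩ (Φ i)ᶜ) :
    ¬ Pref i v (payoff Φ π) := by
  rintro (hlt | ⟨heq, hle, j, hlt⟩)
  · rw [hvi, Bool.lt_iff] at hlt
    exact ht.2 (payoff_eq_true_iff.mp hlt.2)
  · exact not_lt_second ht.1 hle hlt

lemma pref_irrefl {i : Fin n} (u : Fin n → Bool) : ¬ Pref i u u := by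
  rintro (hlt | ⟨-, -, j, hlt⟩) <;> exact lt_irrefl _ hlt

end Aux


section SubsetDir

open Arena

variable {n : ℕ} {S : Type*}

/-- From a secure equilibrium, any coalition play against a single player `i`, started at a
state of the equilibrium outcome, cannot be preferred by `i` over `v`. -/
lemma retaliate (A : Arena n S) {Φ : Fin n → Set (ℕ → S)} (hM : ∀ i, IsMuller (Φ i))
    {v : Fin n → Bool} {σ : Fin n → List S → S → S} {s : S}
    (hσ : ∀ j, A.IsStrategy (σ j)) (hSE : A.IsSE Φ σ s)
    (hpay : payoff Φ (A.outcome σ s) = v) (k : ℕ) (i : Fin n) :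
    ∃ prof : Fin n → List S → S → S,
      (∀ j ∈ ({i}ᶜ : Set (Fin n)), A.IsStrategy (prof j)) ∧
      ∀ π ∈ A.OutP ({i}ᶜ) prof (A.outcome σ s k), ¬ Pref i v (payoff Φ π) := by
  classical
  set ρ := A.outcome σ s with hρdef
  have hplay : A.IsPlay ρ := outcome_isPlay A s hσ
  refine ⟨fun j h t => σ j (Arena.hist ρ k ++ h) t, fun j _ => fun h t => hσ j _ _, ?_⟩
  rintro π ⟨hπ0, hπplay, hπcons⟩ hpref
  set ρ' := glue k ρ π with hρ'def
  have hρ'le : ∀ j ≤ k, ρ' j = ρ j := by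
    intro j hj
    rcases Nat.lt_or_ge j k with h | h
    · exact glue_lt _ _ h
    · have hjk : j = k := le_antisymm hj h
      rw [hjk]
      exact (glue_add k ρ π 0).trans hπ0
  have hρ'add : ∀ m, ρ' (k + m) = π m := glue_add k ρ π
  have hρ'0 : ρ' 0 = s := (hρ'le 0 (Nat.zero_le k)).trans rfl
  have hρ'play : A.IsPlay ρ' := by
    intro j
    rcases Nat.lt_or_ge j k with h | h
    · rw [hρ'le j h.le, hρ'le (j + 1) h]
      exact hplay j
    · obtain ⟨m, rfl⟩ : ∃ m, j = k + m := ⟨j - k, by omega⟩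
      have e2 : ρ' (k + m + 1) = π (m + 1) := by
        rw [show k + m + 1 = k + (m + 1) by omega]
        exact hρ'add (m + 1)
      rw [hρ'add m, e2]
      exact hπplay m
  have hhist1 : ∀ m ≤ k, Arena.hist ρ' m = Arena.hist ρ m :=
    fun m hm => hist_congr (fun j hj => hρ'le j (by omega))
  have hhist2 : ∀ m, Arena.hist ρ' (k + m) = Arena.hist ρ k ++ Arena.hist π m := by
    intro m
    rw [hist_add]
    congr 1
    · exact hhist1 k le_rfl
    · exact hist_congr fun j hj => hρ'add j
  have hcons' : ∀ j, j ≠ i → A.Consistent j (σ j) ρ' := by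
    intro j hj m hown
    rcases Nat.lt_or_ge m k with h | h
    · have e0 : ρ' m = ρ m := hρ'le m h.le
      rw [hρ'le (m + 1) h, e0, hhist1 m h.le]
      exact (outcome_consistent A σ s j) m (by rw [← hρdef, ← e0]; exact hown)
    · obtain ⟨m', rfl⟩ : ∃ m', m = k + m' := ⟨m - k, by omega⟩
      have e0 := hρ'add m'
      have e1 : ρ' (k + m' + 1) = π (m' + 1) := by
        rw [show k + m' + 1 = k + (m' + 1) by omega]
        exact hρ'add (m' + 1)
      rw [e1, hhist2 m', e0]
      exact hπcons j (by simpa using hj) m' (by rw [← e0]; exact hown)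
  have houtc : ρ' = A.outcome (Function.update σ i (A.mimic ρ')) s := by
    have h := outcome_update_mimic A σ i ρ' hcons'
    rwa [hρ'0] at h
  have hpayρ' : payoff Φ ρ' = payoff Φ π := payoff_congr hM (infOcc_glue k ρ π)
  exact hSE i ⟨A.mimic ρ', mimic_isStrategy A hρ'play,
    by rw [hpay, ← houtc, hpayρ']; exact hpref⟩

lemma outcome_mem_Av (A : Arena n S) {Φ : Fin n → Set (ℕ → S)} (hM : ∀ i, IsMuller (Φ i))
    {v : Fin n → Bool} {σ : Fin n → List S → S → S} {s : S}
    (hσ : ∀ j, A.IsStrategy (σ j)) (hSE : A.IsSE Φ σ s)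
    (hpay : payoff Φ (A.outcome σ s) = v) (k : ℕ) :
    A.outcome σ s k ∈ A.Av Φ v := by
  classical
  constructor
  · rw [Set.mem_iInter₂]
    intro w hw
    have hw' : v w = true := hw
    obtain ⟨prof, h1, h2⟩ := retaliate A hM hσ hSE hpay k w
    refine ⟨prof, h1, fun π hπ => ?_⟩
    by_contra hne
    simp only [Set.mem_union, Set.mem_compl_iff, not_or, not_not] at hne
    exact h2 π hπ (pref_core hne.1.1 hne.1.2 (by rw [hw', payoff_eq_true_iff]; exact hne.2))
  · rw [Set.mem_iInter₂]
    intro l hl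
    have hl' : v l = false := hl
    obtain ⟨prof, h1, h2⟩ := retaliate A hM hσ hSE hpay k l
    refine ⟨prof, h1, fun π hπ => ?_⟩
    by_contra hne
    by_cases hmem : π ∈ Φ l
    · refine h2 π hπ (Or.inl ?_)
      rw [hl', payoff_eq_true_iff.mpr hmem]
      exact Bool.false_lt_true
    · have hWL : π ∉ phiW Φ v ∪ phiL Φ v := fun hc => hne ⟨hc, hmem⟩
      simp only [Set.mem_union, not_or] at hWL
      refine h2 π hπ (pref_core hWL.1 hWL.2 ?_)
      rw [hl', payoff_eq_false_iff]
      exact hmem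

lemma SEset_subset (A : Arena n S) {Φ : Fin n → Set (ℕ → S)} (hM : ∀ i, IsMuller (Φ i))
    (v : Fin n → Bool) :
    A.SEset Φ v ⊆
      {s | s ∈ A.Av Φ v ∧ ∃ ρ : ℕ → S, ρ 0 = s ∧ A.IsPlay ρ ∧
        (∀ k, ρ k ∈ A.Av Φ v) ∧ ρ ∈ phiW Φ v ∩ (phiL Φ v)ᶜ} := by
  rintro s ⟨σ, hσ, hSE, hpay⟩
  have hAv := outcome_mem_Av A hM hσ hSE hpay
  have hW : A.outcome σ s ∈ phiW Φ v := by
    rw [mem_phiW]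
    intro i hi
    rw [← payoff_eq_true_iff (Φ := Φ)]
    rw [hpay]; exact hi
  have hL : A.outcome σ s ∉ phiL Φ v := by
    rw [mem_phiL]
    rintro ⟨i, hi, hmem⟩
    have := payoff_eq_true_iff.mpr hmem
    rw [hpay, hi] at this
    exact Bool.false_ne_true this
  exact ⟨hAv 0, A.outcome σ s, rfl, outcome_isPlay A s hσ, hAv, hW, hL⟩

end SubsetDir


section SupsetDir

open Arena

variable {n : ℕ} {S : Type*}

/-- Extension of the finite history `h · t` to an infinite sequence. -/
def gext (h : List S) (t : S) : ℕ → S := fun m => if hm : m < h.length then h[m] else t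

lemma gext_hist (τ : ℕ → S) (K m : ℕ) (hm : m ≤ K) : gext (Arena.hist τ K) (τ K) m = τ m := by
  unfold gext
  rcases Nat.lt_or_ge m K with h | h
  · rw [dif_pos (by simpa using h)]
    exact hist_getElem τ K m _
  · have hmK : m = K := by omega
    rw [hmK, dif_neg (by simp)]

open Classical in
/-- The equilibrium strategy profile: follow `ρ` as long as nobody deviated; as soon as a
deviation happened, at the deviation state `ρ k` switch to the retaliation profile `ret k`
against the owner of `ρ k`. -/
noncomputable def devStrat (A : Arena n S) (ρ : ℕ → S)
    (ret : ℕ → Fin n → List S → S → S) (j : Fin n) (h : List S) (t : S) : S :=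
  if hc : ∃ m, m ≤ h.length ∧ gext h t m ≠ ρ m then
    if j = A.owner (ρ (Nat.find hc - 1)) then Classical.choose (A.succ_exists t)
    else ret (Nat.find hc - 1) j (h.drop (Nat.find hc - 1)) t
  else ρ (h.length + 1)

lemma devStrat_on (A : Arena n S) (ρ : ℕ → S) (ret : ℕ → Fin n → List S → S → S)
    (k : ℕ) (j : Fin n) : devStrat A ρ ret j (Arena.hist ρ k) (ρ k) = ρ (k + 1) := by
  unfold devStrat
  rw [dif_neg, hist_length]
  push_neg
  intro m hm
  rw [hist_length] at hm
  rw [gext_hist ρ k m hm]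

lemma devStrat_isStrategy (A : Arena n S) (ρ : ℕ → S) (ret : ℕ → Fin n → List S → S → S)
    (hρ : A.IsPlay ρ) (hret : ∀ k j, j ≠ A.owner (ρ k) → A.IsStrategy (ret k j))
    (j : Fin n) : A.IsStrategy (devStrat A ρ ret j) := by
  intro h t
  unfold devStrat
  split
  next hc =>
    split
    next => exact Classical.choose_spec (A.succ_exists t)
    next hj => exact hret _ j hj _ _
  next hc =>
    push_neg at hc
    have ht := hc h.length le_rfl
    unfold gext at ht
    rw [dif_neg (lt_irrefl _)] at ht
    rw [ht]
    exact hρ _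

lemma devStrat_dev (A : Arena n S) (ρ : ℕ → S) (ret : ℕ → Fin n → List S → S → S)
    {τ : ℕ → S} {k : ℕ} (hτk : ∀ m' ≤ k, τ m' = ρ m') (hne1 : τ (k + 1) ≠ ρ (k + 1))
    (m : ℕ) (hm : 1 ≤ m) (j : Fin n) (hj : j ≠ A.owner (ρ k)) :
    devStrat A ρ ret j (Arena.hist τ (k + m)) (τ (k + m))
      = ret k j (Arena.hist (fun j' => τ (k + j')) m) (τ (k + m)) := by
  classical
  unfold devStrat
  have hc : ∃ m', m' ≤ (Arena.hist τ (k + m)).length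
      ∧ gext (Arena.hist τ (k + m)) (τ (k + m)) m' ≠ ρ m' := by
    refine ⟨k + 1, by rw [hist_length]; omega, ?_⟩
    rw [gext_hist τ (k + m) (k + 1) (by omega)]
    exact hne1
  rw [dif_pos hc]
  have hfind : Nat.find hc = k + 1 := by
    rw [Nat.find_eq_iff]
    refine ⟨⟨by rw [hist_length]; omega,
      by rw [gext_hist τ (k + m) (k + 1) (by omega)]; exact hne1⟩, ?_⟩
    rintro m' hm' ⟨h1, h2⟩
    apply h2
    rw [gext_hist τ (k + m) m' (by rw [hist_length] at h1; exact h1)]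
    exact hτk m' (by omega)
  rw [hfind]
  simp only [Nat.add_sub_cancel]
  rw [if_neg hj]
  congr 1
  exact hist_drop τ k m

lemma SEset_supset (A : Arena n S) {Φ : Fin n → Set (ℕ → S)} (hM : ∀ i, IsMuller (Φ i))
    (v : Fin n → Bool) :
    {s | s ∈ A.Av Φ v ∧ ∃ ρ : ℕ → S, ρ 0 = s ∧ A.IsPlay ρ ∧
        (∀ k, ρ k ∈ A.Av Φ v) ∧ ρ ∈ phiW Φ v ∩ (phiL Φ v)ᶜ} ⊆ A.SEset Φ v := by
  classical
  rintro s ⟨hsAv, ρ, hρ0, hρplay, hAv, hρW, hρL⟩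
  have hWin : ∀ k i, ρ k ∈ A.Win ({i}ᶜ)
      (if v i = true then phiW Φ v ∪ phiL Φ v ∪ (Φ i)ᶜ
       else (phiW Φ v ∪ phiL Φ v) ∩ (Φ i)ᶜ) := by
    intro k i
    obtain ⟨h1, h2⟩ := hAv k
    simp only [Set.mem_iInter] at h1 h2
    by_cases hv : v i = true
    · rw [if_pos hv]
      exact h1 i hv
    · rw [if_neg hv]
      exact h2 i (by simpa using hv)
  have hWin' : ∀ k, ∃ prof : Fin n → List S → S → S,
      (∀ j, j ≠ A.owner (ρ k) → A.IsStrategy (prof j)) ∧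
      ∀ π ∈ A.OutP ({A.owner (ρ k)}ᶜ) prof (ρ k), ¬ Pref (A.owner (ρ k)) v (payoff Φ π) := by
    intro k
    obtain ⟨prof, h1, h2⟩ := hWin k (A.owner (ρ k))
    refine ⟨prof, fun j hj => h1 j (by simpa using hj), fun π hπ => ?_⟩
    have hmem := h2 hπ
    by_cases hv : v (A.owner (ρ k)) = true
    · rw [if_pos hv] at hmem
      exact not_pref_of_mem_W hv hmem
    · rw [if_neg hv] at hmem
      exact not_pref_of_mem_L (by simpa using hv) hmem
  choose ret hret1 hret2 using hWin'
  have hstrats : ∀ j, A.IsStrategy (devStrat A ρ ret j) :=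
    devStrat_isStrategy A ρ ret hρplay hret1
  have houtc : ρ = A.outcome (devStrat A ρ ret) s := by
    apply outcome_unique A hρ0
    intro k
    exact (devStrat_on A ρ ret k (A.owner (ρ k))).symm
  have hpayρ : payoff Φ ρ = v := payoff_eq_of Φ v hρW hρL
  refine ⟨devStrat A ρ ret, hstrats, ?_, by rw [← houtc]; exact hpayρ⟩
  intro i
  rintro ⟨σ', hσ', hpref⟩
  rw [← houtc, hpayρ] at hpref
  set τ := A.outcome (Function.update (devStrat A ρ ret) i σ') s with hτdef
  have hupd : ∀ j, A.IsStrategy ((Function.update (devStrat A ρ ret) i σ') j) := by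
    intro j
    by_cases hji : j = i
    · rw [hji, Function.update_self]
      exact hσ'
    · rw [Function.update_of_ne hji]
      exact hstrats j
  have hτplay : A.IsPlay τ := by
    have h := outcome_isPlay A s hupd
    rwa [← hτdef] at h
  have hτ0 : τ 0 = s := by rw [hτdef]; rfl
  have hτcons : ∀ j, A.Consistent j ((Function.update (devStrat A ρ ret) i σ') j) τ := by
    intro j
    have h := outcome_consistent A (Function.update (devStrat A ρ ret) i σ') s j
    rwa [← hτdef] at h
  by_cases heq : τ = ρ
  · rw [heq, hpayρ] at hpref
    exact pref_irrefl v hpref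
  · have hex : ∃ m, τ m ≠ ρ m := Function.ne_iff.mp heq
    have hdpos : 0 < Nat.find hex := by
      rcases Nat.eq_zero_or_pos (Nat.find hex) with h0 | h
      · exfalso
        have hsp := Nat.find_spec hex
        rw [h0] at hsp
        exact hsp (hτ0.trans hρ0.symm)
      · exact h
    set k := Nat.find hex - 1 with hkdef
    have hτk : ∀ m ≤ k, τ m = ρ m := fun m hm =>
      not_not.mp (Nat.find_min hex (show m < Nat.find hex by omega))
    have hne1 : τ (k + 1) ≠ ρ (k + 1) := by
      have hk1 : k + 1 = Nat.find hex := by omega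
      rw [hk1]
      exact Nat.find_spec hex
    have hown : A.owner (ρ k) = i := by
      by_contra hni
      have hcons := hτcons (A.owner (ρ k)) k (by rw [hτk k le_rfl])
      rw [Function.update_of_ne hni] at hcons
      rw [hist_congr (fun j hj => hτk j hj.le), hτk k le_rfl] at hcons
      rw [devStrat_on] at hcons
      exact hne1 hcons
    have hπ0 : (fun m => τ (k + m)) 0 = ρ k := hτk k le_rfl
    have hπmem : (fun m => τ (k + m)) ∈ A.OutP ({A.owner (ρ k)}ᶜ) (ret k) (ρ k) := by
      refine ⟨hπ0, ?_, ?_⟩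
      · intro m
        show A.E (τ (k + m)) (τ (k + (m + 1)))
        rw [show k + (m + 1) = (k + m) + 1 by omega]
        exact hτplay (k + m)
      · intro j hj m hownm
        have hjo : j ≠ A.owner (ρ k) := by simpa using hj
        cases m with
        | zero =>
          exfalso
          apply hjo
          have h0 : A.owner (ρ k) = j := by
            rw [← hτk k le_rfl]
            exact hownm
          exact h0.symm
        | succ m =>
          have hji : j ≠ i := by rw [← hown]; exact hjo
          have hc := hτcons j (k + (m + 1)) hownm
          rw [Function.update_of_ne hji] at hc
          rw [devStrat_dev A ρ ret hτk hne1 (m + 1) (by omega) j hjo] at hc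
          rw [show k + (m + 1) + 1 = k + (m + 1 + 1) from by omega] at hc
          exact hc
    have hnopref := hret2 k _ hπmem
    rw [hown] at hnopref
    apply hnopref
    have hshift : payoff Φ τ = payoff Φ (fun m => τ (k + m)) :=
      payoff_congr hM (infOcc_shift τ k).symm
    rw [← hshift]
    exact hpref

end SupsetDir

/-- Characterization of secure equilibria: `SE_v` is the set of states `s ∈ A_v` from which
some play stays in `A_v` forever and belongs to `φ_W ∩ ¬φ_L`. -/
theorem SEset_characterization {n : ℕ} {S : Type*} [Fintype S]
    (A : Arena n S) (Φ : Fin n → Set (ℕ → S)) (hM : ∀ i, IsMuller (Φ i))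
    (v : Fin n → Bool) :
    A.SEset Φ v =
      {s | s ∈ A.Av Φ v ∧ ∃ ρ : ℕ → S, ρ 0 = s ∧ A.IsPlay ρ ∧
        (∀ k, ρ k ∈ A.Av Φ v) ∧ ρ ∈ phiW Φ v ∩ (phiL Φ v)ᶜ} :=
  Set.Subset.antisymm (SEset_subset A hM v) (SEset_supset A hM v)
end

section
/- (Plays leaving A_v cannot come from an SE with payoff v.) Let G = (A, Φ) be an n-player game on a finite arena A with objective profile Φ = (φ₁, …, φ_n), where every φ_i is a Muller objective, and let v = (v₁, …, v_n) ∈ {0,1}^n. Let I = [1,n], W = {i | v_i = 1}, L = {i | v_i = 0}, φ_W = ⋂_{i∈W} φ_i, φ_L = ⋃_{i∈L} φ_i, and A_v = ⋂_{w∈W} ⟨⟨I\{w}⟩⟩(φ_W ∪ φ_L ∪ ¬φ_w) ∩ ⋂_{l∈L} ⟨⟨I\{l}⟩⟩((φ_W ∪ φ_L) ∩ ¬φ_l). If Σ is a full strategy profile and s a state such that Pay_s^Σ(Φ) = v and the play Out_s(Σ) visits some state in S \ A_v, then Σ is not a secure equilibrium at s. -/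
namespace Arena

variable {n : ℕ} {S : Type*}

lemma hist_length (ρ : ℕ → S) (k : ℕ) : (hist ρ k).length = k := by
  simp [hist]

lemma hist_congr {ρ ρ' : ℕ → S} {k : ℕ} (h : ∀ j < k, ρ j = ρ' j) :
    hist ρ k = hist ρ' k := by
  unfold hist
  exact congrArg _ (funext fun j => h j j.isLt)

lemma hist_succ (ρ : ℕ → S) (k : ℕ) : hist ρ (k + 1) = hist ρ k ++ [ρ k] := by
  unfold hist
  rw [List.ofFn_succ']
  simp [List.concat_eq_append]

lemma step_iterate (A : Arena n S) (σ : Fin n → List S → S → S) (s : S) (k : ℕ) :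
    (A.step σ)^[k] ([], s) = (hist (A.outcome σ s) k, A.outcome σ s k) := by
  induction k with
  | zero => simp [hist, outcome]
  | succ k ih =>
    rw [Function.iterate_succ_apply', ih]
    have hout : A.outcome σ s (k + 1)
        = σ (A.owner (A.outcome σ s k)) (hist (A.outcome σ s) k) (A.outcome σ s k) := by
      unfold outcome
      rw [Function.iterate_succ_apply', ih]
      rfl
    rw [hist_succ]
    simp [step, hout]

lemma outcome_zero (A : Arena n S) (σ : Fin n → List S → S → S) (s : S) :
    A.outcome σ s 0 = s := rfl

lemma outcome_succ (A : Arena n S) (σ : Fin n → List S → S → S) (s : S) (k : ℕ) :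
    A.outcome σ s (k + 1)
      = σ (A.owner (A.outcome σ s k)) (hist (A.outcome σ s) k) (A.outcome σ s k) := by
  unfold outcome
  rw [Function.iterate_succ_apply', step_iterate]
  rfl

lemma outcome_isPlay (A : Arena n S) (σ : Fin n → List S → S → S)
    (hσ : ∀ i, A.IsStrategy (σ i)) (s : S) : A.IsPlay (A.outcome σ s) := by
  intro m
  rw [outcome_succ]
  exact hσ _ _ _

lemma outcome_eq (A : Arena n S) (σ : Fin n → List S → S → S) (s : S) (τ : ℕ → S)
    (h0 : τ 0 = s)
    (hrec : ∀ m, τ (m + 1) = σ (A.owner (τ m)) (hist τ m) (τ m)) :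
    ∀ m, A.outcome σ s m = τ m := by
  suffices h : ∀ m, ∀ j ≤ m, A.outcome σ s j = τ j from fun m => h m m le_rfl
  intro m
  induction m with
  | zero =>
    intro j hj
    simp only [Nat.le_zero] at hj
    subst hj
    rw [outcome_zero, h0]
  | succ m ih =>
    intro j hj
    rcases Nat.lt_succ_iff_lt_or_eq.mp (Nat.lt_succ_of_le hj) with h' | h'
    · exact ih j (Nat.lt_succ_iff.mp h')
    · subst h'
      rw [outcome_succ, ih m le_rfl,
        hist_congr (fun j hj => ih j (le_of_lt hj)), hrec m]

lemma infOcc_shift (τ π : ℕ → S) (k : ℕ) (h : ∀ m, τ (k + m) = π m) :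
    infOcc τ = infOcc π := by
  ext x
  constructor
  · intro hx N
    obtain ⟨j, hj, hje⟩ := hx (N + k)
    refine ⟨j - k, by omega, ?_⟩
    rw [← hje, ← h (j - k)]
    congr 1
    omega
  · intro hx N
    obtain ⟨j, hj, hje⟩ := hx N
    exact ⟨k + j, by omega, by rw [h j]; exact hje⟩

/-- Key deviation lemma: if the coalition of players other than `i` cannot force `φ` from a
state visited by the outcome, then player `i` has a deviation whose outcome has the same
infinitely-occurring set as some play outside `φ`. -/
lemma deviation (A : Arena n S) (σ : Fin n → List S → S → S) (hσ : ∀ i, A.IsStrategy (σ i))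
    (s : S) (k : ℕ) (i : Fin n) (φ : Set (ℕ → S))
    (h : A.outcome σ s k ∉ A.Win ({i}ᶜ) φ) :
    ∃ π, π ∉ φ ∧ ∃ σ', A.IsStrategy σ' ∧
      infOcc (A.outcome (Function.update σ i σ') s) = infOcc π := by
  classical
  set ρ := A.outcome σ s with hρ
  have hρplay : A.IsPlay ρ := A.outcome_isPlay σ hσ s
  -- shifted coalition strategies
  set σt : Fin n → List S → S → S := fun j g c => σ j (hist ρ k ++ g) c with hσt
  have hnsub : ¬ A.OutP ({i}ᶜ) σt (ρ k) ⊆ φ :=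
    fun hsub => h ⟨σt, fun j _ g c => hσ j _ c, hsub⟩
  obtain ⟨π, hπmem, hπφ⟩ := Set.not_subset.mp hnsub
  obtain ⟨hπ0, hπplay, hπcons⟩ := hπmem
  -- the deviating play
  set τ : ℕ → S := fun m => if m < k then ρ m else π (m - k) with hτ
  have hτlow : ∀ m ≤ k, τ m = ρ m := by
    intro m hm
    by_cases h' : m < k
    · simp [hτ, h']
    · have hmk : m = k := by omega
      simp [hτ, hmk, hπ0]
  have hτhigh : ∀ m, τ (k + m) = π m := by
    intro m
    have h1 : ¬ (k + m < k) := by omega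
    simp only [hτ, if_neg h1]
    congr 1
    omega
  have hτplay : A.IsPlay τ := by
    intro m
    rcases le_or_gt (m + 1) k with h1 | h1
    · rw [hτlow m (by omega), hτlow (m + 1) h1]
      exact hρplay m
    · have e1 : τ m = π (m - k) := by
        rcases le_or_gt k m with h2 | h2
        · have := hτhigh (m - k)
          rwa [show k + (m - k) = m by omega] at this
        · have hmk : m = k - 1 := by omega
          rw [hτlow m (by omega)]
          have h0 : π (m - k) = π 0 := by congr 1; omega
          rw [h0, hπ0]
          congr 1
          omega
      have e2 : τ (m + 1) = π (m + 1 - k) := by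
        have := hτhigh (m + 1 - k)
        rwa [show k + (m + 1 - k) = m + 1 by omega] at this
      rcases le_or_gt k m with h2 | h2
      · rw [e1, e2, show m + 1 - k = (m - k) + 1 by omega]
        exact hπplay (m - k)
      ·
        omega
  -- the deviating strategy follows τ
  set σ' : List S → S → S := fun g c =>
    if A.E c (τ (g.length + 1)) then τ (g.length + 1)
    else Classical.choose (A.succ_exists c) with hσ'
  have hσ'S : A.IsStrategy σ' := by
    intro g c
    by_cases h' : A.E c (τ (g.length + 1))
    · simpa only [hσ', if_pos h'] using h'
    · simp only [hσ', if_neg h']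
      exact Classical.choose_spec (A.succ_exists c)
  -- history concatenation
  have hhist : ∀ d, hist τ (k + d) = hist ρ k ++ hist π d := by
    intro d
    unfold hist
    rw [List.ofFn_add]
    congr 1
    · exact congrArg _ (funext fun j => by
        exact hτlow j (le_of_lt j.isLt))
    · exact congrArg _ (funext fun j => by
        simp only [Fin.coe_natAdd]
        exact hτhigh j)
  -- the recurrence of τ w.r.t. the updated profile
  have hrec : ∀ m, τ (m + 1) = (Function.update σ i σ') (A.owner (τ m)) (hist τ m) (τ m) := by
    intro m
    by_cases ho : A.owner (τ m) = i
    · rw [ho, Function.update_self]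
      simp only [hσ', hist_length]
      rw [if_pos (hτplay m)]
    · rw [Function.update_of_ne ho]
      rcases lt_or_ge m k with hm | hm
      · rw [hτlow (m + 1) (by omega), hist_congr (fun j hj => hτlow j (by omega)),
          hτlow m (le_of_lt hm)]
        rw [hτlow m (le_of_lt hm)] at ho
        rw [hρ, outcome_succ]
      · have e1 : τ m = π (m - k) := by
          have := hτhigh (m - k)
          rwa [show k + (m - k) = m by omega] at this
        have e2 : τ (m + 1) = π ((m - k) + 1) := by
          have := hτhigh (m - k + 1)
          rwa [show k + (m - k + 1) = m + 1 by omega] at this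
        have e3 : hist τ m = hist ρ k ++ hist π (m - k) := by
          have := hhist (m - k)
          rwa [show k + (m - k) = m by omega] at this
        rw [e1] at ho ⊢
        rw [e2, e3]
        exact hπcons (A.owner (π (m - k))) ho (m - k) rfl
  have hout : A.outcome (Function.update σ i σ') s = τ :=
    funext (A.outcome_eq _ s τ (by rw [hτlow 0 (Nat.zero_le k)]; rfl) hrec)
  refine ⟨π, hπφ, σ', hσ'S, ?_⟩
  rw [hout]
  exact infOcc_shift τ π k hτhigh

end Arena

/-- A strategy profile whose outcome has payoff `v` but visits a state outside `A_v`
is not a secure equilibrium. -/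
theorem not_isSE_of_leaves_Av {n : ℕ} {S : Type*} [Fintype S]
    (A : Arena n S) (Φ : Fin n → Set (ℕ → S)) (hM : ∀ i, IsMuller (Φ i))
    (v : Fin n → Bool) (σ : Fin n → List S → S → S) (hσ : ∀ i, A.IsStrategy (σ i)) (s : S)
    (hpay : payoff Φ (A.outcome σ s) = v)
    (hvisit : ∃ k, A.outcome σ s k ∉ A.Av Φ v) :
    ¬ A.IsSE Φ σ s := by
  classical
  obtain ⟨k, hk⟩ := hvisit
  intro hSE
  have hpayv : ∀ j, v j = true ↔ A.outcome σ s ∈ Φ j := by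
    intro j
    rw [← hpay]
    simp [payoff]
  rw [Arena.Av, Set.mem_inter_iff] at hk
  rcases not_and_or.mp hk with hk | hk
  · -- a winner w can deviate
    simp only [Set.mem_iInter, Set.mem_setOf_eq, not_forall] at hk
    obtain ⟨w, hw, hWin⟩ := hk
    obtain ⟨π, hπφ, σ', hσ'S, hinf⟩ := A.deviation σ hσ s k w _ hWin
    have htrans : ∀ j, (A.outcome (Function.update σ w σ') s ∈ Φ j) ↔ π ∈ Φ j := by
      intro j
      obtain ⟨F, hF⟩ := hM j
      rw [hF]
      simp only [Set.mem_setOf_eq, hinf]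
    simp only [Set.mem_union, Set.mem_compl_iff, not_or, not_not] at hπφ
    obtain ⟨⟨hπW, hπL⟩, hπw⟩ := hπφ
    simp only [phiL, Set.mem_iUnion, Set.mem_setOf_eq, not_exists] at hπL
    simp only [phiW, Set.mem_iInter, Set.mem_setOf_eq, not_forall] at hπW
    obtain ⟨j0, hj0W, hj0⟩ := hπW
    refine hSE w ⟨σ', hσ'S, ?_⟩
    rw [hpay]
    right
    refine ⟨?_, ?_, ⟨j0, ?_⟩⟩
    · have h1 : payoff Φ (A.outcome (Function.update σ w σ') s) w = true := by
        simp [payoff, (htrans w).mpr hπw]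
      rw [h1, hw]
    · intro j
      by_cases hvj : v j = true
      · rw [hvj]; exact Bool.le_true _
      · have hvj' : v j = false := by simp [Bool.not_eq_true] at hvj; exact hvj
        have : π ∉ Φ j := hπL j hvj'
        have h2 : payoff Φ (A.outcome (Function.update σ w σ') s) j = false := by
          simp [payoff, (htrans j).not.mpr this]
        rw [h2]
        exact Bool.false_le _
    · have h2 : payoff Φ (A.outcome (Function.update σ w σ') s) j0 = false := by
        simp [payoff, (htrans j0).not.mpr hj0]
      rw [h2, hj0W]
      exact Bool.false_lt_true
  · -- a loser l can deviate
    simp only [Set.mem_iInter, Set.mem_setOf_eq, not_forall] at hk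
    obtain ⟨l, hl, hWin⟩ := hk
    obtain ⟨π, hπφ, σ', hσ'S, hinf⟩ := A.deviation σ hσ s k l _ hWin
    have htrans : ∀ j, (A.outcome (Function.update σ l σ') s ∈ Φ j) ↔ π ∈ Φ j := by
      intro j
      obtain ⟨F, hF⟩ := hM j
      rw [hF]
      simp only [Set.mem_setOf_eq, hinf]
    refine hSE l ⟨σ', hσ'S, ?_⟩
    rw [hpay]
    by_cases hπl : π ∈ Φ l
    · left
      have h1 : payoff Φ (A.outcome (Function.update σ l σ') s) l = true := by
        simp [payoff, (htrans l).mpr hπl]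
      rw [h1, hl]
      exact Bool.false_lt_true
    · right
      simp only [Set.mem_inter_iff, Set.mem_compl_iff, not_and, not_not] at hπφ
      have hπWL : π ∉ phiW Φ v ∪ phiL Φ v := fun hmem => hπl (hπφ hmem)
      simp only [Set.mem_union, not_or] at hπWL
      obtain ⟨hπW, hπL⟩ := hπWL
      simp only [phiL, Set.mem_iUnion, Set.mem_setOf_eq, not_exists] at hπL
      simp only [phiW, Set.mem_iInter, Set.mem_setOf_eq, not_forall] at hπW
      obtain ⟨j0, hj0W, hj0⟩ := hπW
      refine ⟨?_, ?_, ⟨j0, ?_⟩⟩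
      · have h1 : payoff Φ (A.outcome (Function.update σ l σ') s) l = false := by
          simp [payoff, (htrans l).not.mpr hπl]
        rw [h1, hl]
      · intro j
        by_cases hvj : v j = true
        · rw [hvj]; exact Bool.le_true _
        · have hvj' : v j = false := by simp [Bool.not_eq_true] at hvj; exact hvj
          have : π ∉ Φ j := hπL j hvj'
          have h2 : payoff Φ (A.outcome (Function.update σ l σ') s) j = false := by
            simp [payoff, (htrans j).not.mpr this]
          rw [h2]
          exact Bool.false_le _
      · have h2 : payoff Φ (A.outcome (Function.update σ l σ') s) j0 = false := by
          simp [payoff, (htrans j0).not.mpr hj0]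
        rw [h2, hj0W]
        exact Bool.false_lt_true
end

section
/- (Streett representation of the retaliation objective against a loser, Büchi case.) Let S be a finite nonempty set, let (B_i)_{i∈[1,n]} be subsets of S, let W, L partition [1,n], and let l ∈ L. Set B_L = ⋃_{j∈L} B_j. Then (⋂_{i∈W} Büchi(B_i) ∪ ⋃_{j∈L} Büchi(B_j)) ∩ coBüchi(B_l) = Streett(T') for T' = {(S, B_i ∪ B_L) | i ∈ W} ∪ {(B_l, ∅)}, where the intersection over an empty W is S^ω. -/
lemma infOcc_nonempty {S : Type*} [Finite S] (ρ : ℕ → S) : (infOcc ρ).Nonempty := by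
  obtain ⟨s, hs⟩ := Finite.exists_infinite_fiber ρ
  refine ⟨s, fun N => ?_⟩
  obtain ⟨k, hk, hkN⟩ := (Set.infinite_coe_iff.1 hs).exists_gt N
  exact ⟨k, hkN.le, hk⟩

/-- Streett representation of the retaliation objective against a loser (Büchi case):
`(⋂_{i∈W} Büchi(B_i) ∪ ⋃_{j∈L} Büchi(B_j)) ∩ coBüchi(B_l)
  = Streett({(S, B_i ∪ B_L) | i ∈ W} ∪ {(B_l, ∅)})`. -/
theorem streett_repr_loser_buchi {S : Type*} [Fintype S] [Nonempty S] {n : ℕ}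
    (B : Fin n → Set S) (W L : Set (Fin n))
    (hUnion : W ∪ L = Set.univ) (hDisj : W ∩ L = ∅) (l : Fin n) (hl : l ∈ L) :
    ((⋂ i ∈ W, Buchi (B i)) ∪ (⋃ j ∈ L, Buchi (B j))) ∩ CoBuchi (B l) =
      Streett ({q : Set S × Set S | ∃ i ∈ W, q = (Set.univ, B i ∪ ⋃ j ∈ L, B j)} ∪
        {(B l, (∅ : Set S))}) := by
  ext ρ
  have hne : (infOcc ρ).Nonempty := infOcc_nonempty ρ
  constructor
  · rintro ⟨h1, h2⟩
    refine Set.mem_iInter₂.2 ?_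
    rintro FG (⟨i, hi, rfl⟩ | rfl)
    · right
      rcases h1 with hW | hL
      · obtain ⟨s, hs, hsB⟩ := Set.mem_iInter₂.1 hW i hi
        exact ⟨s, hs, Or.inl hsB⟩
      · obtain ⟨j, hj, s, hs, hsB⟩ := Set.mem_iUnion₂.1 hL
        exact ⟨s, hs, Or.inr (Set.mem_biUnion hj hsB)⟩
    · left; exact h2
  · intro h
    have h2 : ρ ∈ CoBuchi (B l) := by
      have := Set.mem_iInter₂.1 h (B l, ∅) (Or.inr rfl)
      rcases this with hc | ⟨s, hs, hsB⟩
      · exact hc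
      · exact absurd hsB (Set.notMem_empty s)
    refine ⟨?_, h2⟩
    by_cases hBL : (infOcc ρ ∩ ⋃ j ∈ L, B j).Nonempty
    · obtain ⟨s, hs, hsB⟩ := hBL
      obtain ⟨j, hj, hsj⟩ := Set.mem_iUnion₂.1 hsB
      exact Or.inr (Set.mem_iUnion₂.2 ⟨j, hj, s, hs, hsj⟩)
    · left
      refine Set.mem_iInter₂.2 fun i hi => ?_
      have := Set.mem_iInter₂.1 h (Set.univ, B i ∪ ⋃ j ∈ L, B j) (Or.inl ⟨i, hi, rfl⟩)
      rcases this with hc | ⟨s, hs, hsB⟩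
      · exact absurd hc (by simpa [CoBuchi, Set.inter_univ] using hne.ne_empty)
      · rcases hsB with hsB | hsB
        · exact ⟨s, hs, hsB⟩
        · exact absurd ⟨s, hs, hsB⟩ hBL
end

section
/- (Rabin representation of the retaliation objective against a loser, co-Büchi case.) Let S be a set, let (C_i)_{i∈[1,n]} be subsets of S, let W, L partition [1,n], and let l ∈ L. Set C_W = ⋃_{i∈W} C_i. Then (⋂_{i∈W} coBüchi(C_i) ∪ ⋃_{j∈L} coBüchi(C_j)) ∩ Büchi(C_l) = Rabin(R') for R' = {(C_l, C_W)} ∪ {(C_l, C_j) | j ∈ L}, where the intersection over an empty W is S^ω. -/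
/-- Rabin representation of the retaliation objective against a loser (co-Büchi case):
`(⋂_{i∈W} coBüchi(C_i) ∪ ⋃_{j∈L} coBüchi(C_j)) ∩ Büchi(C_l)
  = Rabin({(C_l, C_W)} ∪ {(C_l, C_j) | j ∈ L})`. -/
theorem rabin_repr_loser_coBuchi {S : Type*} {n : ℕ} (C : Fin n → Set S)
    (W L : Set (Fin n)) (hUnion : W ∪ L = Set.univ) (hDisj : W ∩ L = ∅)
    (l : Fin n) (hl : l ∈ L) :
    ((⋂ i ∈ W, CoBuchi (C i)) ∪ (⋃ j ∈ L, CoBuchi (C j))) ∩ Buchi (C l) =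
      Rabin ({(C l, ⋃ i ∈ W, C i)} ∪
        {q : Set S × Set S | ∃ j ∈ L, q = (C l, C j)}) := by
  ext ρ
  simp only [Rabin, Buchi, CoBuchi, Set.mem_inter_iff, Set.mem_union, Set.mem_iUnion,
    Set.mem_iInter, Set.mem_setOf_eq, Set.mem_singleton_iff, exists_prop]
  constructor
  · rintro ⟨h | ⟨j, hj, hcj⟩, hb⟩
    · refine ⟨(C l, ⋃ i ∈ W, C i), Or.inl rfl, hb, ?_⟩
      simp only [Set.inter_iUnion, Set.iUnion_eq_empty]
      exact h
    · exact ⟨(C l, C j), Or.inr ⟨j, hj, rfl⟩, hb, hcj⟩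
  · rintro ⟨⟨F, G⟩, hFG | ⟨j, hj, hq⟩, hb, hc⟩
    · injection hFG with h1 h2
      subst h1; subst h2
      refine ⟨Or.inl ?_, hb⟩
      simpa only [Set.inter_iUnion, Set.iUnion_eq_empty] using hc
    · injection hq with h1 h2
      subst h1; subst h2
      exact ⟨Or.inr ⟨j, hj, hc⟩, hb⟩
end
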